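/- arXiv:1609.06212 — 8 statements merged into one kernel-verified Lean document; each statement's English description precedes it below -/
import Mathlib

section
/- Let ρ > 0 and L ≥ 0, and let ξ : ℝ → ℝ be Lipschitz with constant L such that ρ ≤ 1 + ξ′(σ) for almost every σ ∈ ℝ; set x(s) = s + ξ(s) with inverse s(·), and define η(y) = s(y) − y. Then: (i) η(y) = −ξ(s(y)) for all y; (ii) sup_y |η(y)| = sup_σ |ξ(σ)|; (iii) η is Lipschitz with constant ρ⁻¹·L; (iv) ∫ η(y)² dy ≤ (1 + L)² ∫ ξ(σ)² dσ; and (v) ∫ η′(y)² dy ≤ ρ⁻¹ ∫ ξ′(σ)² dσ (where η′ denotes the almost-everywhere defined derivative of the Lipschitz function η). -/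
/-!
The map `x = id + ξ` is Lipschitz with `x' = 1 + ξ' ∈ [ρ, 1 + L]` almost everywhere. Comparing
the length of `x '' [b, a]` with `∫ |x'|` over `[b, a]` gives `ρ |a - b| ≤ |x a - x b|`, so the
inverse `s` is `ρ⁻¹`-Lipschitz. As `x` and `s` are Lipschitz, both map null sets to null sets,
hence the one-dimensional change of variables `y = x σ` holds on all of `ℝ`. Since `η ∘ x = -ξ`
and `η' ∘ x = (1 + ξ')⁻¹ - 1` almost everywhere, it turns `∫ η²` and `∫ η'²` into
`∫ (1 + ξ') ξ²` and `∫ (1 + ξ')⁻¹ ξ'²`, which are compared with `∫ ξ²` and `∫ ξ'²` pointwise.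
-/

open MeasureTheory Set Function

theorem LipschitzWith.volume_image_null {f : ℝ → ℝ} {K : NNReal} (hf : LipschitzWith K f)
    {s : Set ℝ} (hs : volume s = 0) : volume (f '' s) = 0 := by
  have h := hf.hausdorffMeasure_image_le zero_le_one s
  rwa [hausdorffMeasure_real, hs, mul_zero, nonpos_iff_eq_zero] at h

theorem ae_comp_of_lipschitzWith_leftInverse {f g : ℝ → ℝ} {K : NNReal}
    (hg : LipschitzWith K g) (hgf : LeftInverse g f) {p : ℝ → Prop} (hp : ∀ᵐ y, p y) :
    ∀ᵐ x, p (f x) := by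
  rw [ae_iff] at hp ⊢
  refine measure_mono_null (fun x hx => ?_) (hg.volume_image_null hp)
  exact ⟨f x, hx, hgf x⟩

theorem integral_eq_integral_abs_deriv_mul_comp {f g f' : ℝ → ℝ} {K : NNReal}
    (hf : LipschitzWith K f) (hgf : LeftInverse g f) (hfg : RightInverse g f)
    (hderiv : ∀ᵐ x, HasDerivAt f (f' x) x) (φ : ℝ → ℝ) :
    ∫ y, φ y = ∫ x, |f' x| * φ (f x) := by
  obtain ⟨D, hD, hDm, hDderiv⟩ := hderiv.exists_measurable_mem
  have hfD : ∀ᵐ y, y ∈ f '' D :=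
    (ae_comp_of_lipschitzWith_leftInverse hf hfg hD).mono fun y hy => ⟨g y, hy, hfg y⟩
  calc ∫ y, φ y = ∫ y in f '' D, φ y := by rw [Measure.restrict_eq_self_of_ae_mem hfD]
    _ = ∫ x in D, |f' x| * φ (f x) :=
      integral_image_eq_integral_abs_deriv_smul hDm
        (fun x hx => (hDderiv x hx).hasDerivWithinAt) hgf.injective.injOn φ
    _ = ∫ x, |f' x| * φ (f x) := by rw [Measure.restrict_eq_self_of_ae_mem hD]

theorem ae_deriv_comp_eq_inv_of_leftInverse {f g f' g' : ℝ → ℝ} {K : NNReal}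
    (hg : LipschitzWith K g) (hgf : LeftInverse g f) (hfg : RightInverse g f)
    (hf' : ∀ᵐ x, HasDerivAt f (f' x) x) (hf'0 : ∀ᵐ x, f' x ≠ 0)
    (hg' : ∀ᵐ y, HasDerivAt g (g' y) y) : ∀ᵐ x, g' (f x) = (f' x)⁻¹ := by
  filter_upwards [hf', hf'0, ae_comp_of_lipschitzWith_leftInverse hg hgf hg'] with x hfx hfx0 hgx
  have hfx' : HasDerivAt f (f' x) (g (f x)) := by rwa [hgf x]
  exact hgx.unique (hfx'.of_local_left_inverse hg.continuous.continuousAt hfx0 (.of_forall hfg))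

theorem mul_abs_sub_le_abs_sub_of_le_abs_deriv {f f' : ℝ → ℝ} {ρ : ℝ} (hρ : 0 ≤ ρ)
    (hf : Continuous f) (hinj : Injective f) (hderiv : ∀ᵐ x, HasDerivAt f (f' x) x)
    (hlow : ∀ᵐ x, ρ ≤ |f' x|) (a b : ℝ) : ρ * |a - b| ≤ |f a - f b| := by
  wlog hba : b ≤ a generalizing a b
  · rw [abs_sub_comm a, abs_sub_comm (f a)]
    exact this b a (le_of_not_ge hba)
  obtain ⟨D, hD, hDm, hDf⟩ := (hderiv.and hlow).exists_measurable_mem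
  set s := Icc b a ∩ D
  have hs : MeasurableSet s := measurableSet_Icc.inter hDm
  have hvol_s : volume s = ENNReal.ofReal (a - b) := by
    rw [measure_inter_conull hD, Real.volume_Icc]
  have himage : f '' s ⊆ uIcc (f b) (f a) := by
    refine (image_mono inter_subset_left).trans ?_
    rcases hf.strictMono_of_inj hinj with hmono | hanti
    · exact hmono.monotone.image_Icc_subset.trans Icc_subset_uIcc
    · exact hanti.antitone.image_Icc_subset.trans Icc_subset_uIcc'
  have hvol_image : volume (f '' s) = ∫⁻ x in s, ENNReal.ofReal |f' x| := by
    simpa using lintegral_image_eq_lintegral_abs_deriv_mul hs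
      (fun x hx => (hDf x hx.2).1.hasDerivWithinAt) hinj.injOn 1
  rw [← ENNReal.ofReal_le_ofReal_iff (abs_nonneg _), abs_of_nonneg (sub_nonneg.2 hba)]
  calc ENNReal.ofReal (ρ * (a - b)) = ∫⁻ _ in s, ENNReal.ofReal ρ := by
        rw [setLIntegral_const, hvol_s, ENNReal.ofReal_mul hρ]
    _ ≤ ∫⁻ x in s, ENNReal.ofReal |f' x| :=
      setLIntegral_mono' hs fun x hx => ENNReal.ofReal_le_ofReal (hDf x hx.2).2
    _ = volume (f '' s) := hvol_image.symm
    _ ≤ volume (uIcc (f b) (f a)) := measure_mono himage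
    _ = ENNReal.ofReal |f a - f b| := Real.volume_interval

/-- The lower bound `c > 0` makes `w * g` non-integrable whenever `g` is, so that both Bochner
integrals then take the junk value `0`. -/
theorem integral_mul_le_mul_integral_of_ae_mem_Icc {α : Type*} [MeasurableSpace α]
    {μ : Measure α} {w g : α → ℝ} {c C : ℝ} (hc : 0 < c)
    (hw : AEStronglyMeasurable w μ) (hg : AEStronglyMeasurable g μ) (hg0 : 0 ≤ᵐ[μ] g)
    (hwc : ∀ᵐ a ∂μ, w a ∈ Icc c C) : ∫ a, w a * g a ∂μ ≤ C * ∫ a, g a ∂μ := by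
  by_cases hgi : Integrable g μ
  · have hwgi : Integrable (fun a => w a * g a) μ := by
      refine (hgi.const_mul C).mono' (hw.mul hg) ?_
      filter_upwards [hwc, hg0] with a ha hga
      rw [Real.norm_eq_abs, abs_of_nonneg (mul_nonneg (hc.le.trans ha.1) hga)]
      exact mul_le_mul_of_nonneg_right ha.2 hga
    calc ∫ a, w a * g a ∂μ ≤ ∫ a, C * g a ∂μ := by
          refine integral_mono_ae hwgi (hgi.const_mul C) ?_
          filter_upwards [hwc, hg0] with a ha hga
          exact mul_le_mul_of_nonneg_right ha.2 hga
      _ = C * ∫ a, g a ∂μ := integral_const_mul C _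
  · have hwgi : ¬ Integrable (fun a => w a * g a) μ := fun hwgi => by
      refine hgi ((hwgi.const_mul c⁻¹).mono' hg ?_)
      filter_upwards [hwc, hg0] with a ha hga
      rw [Real.norm_eq_abs, abs_of_nonneg hga, le_inv_mul_iff₀ hc]
      exact mul_le_mul_of_nonneg_right ha.1 hga
    rw [integral_undef hwgi, integral_undef hgi, mul_zero]

theorem abs_sub_le_inv_mul_of_le_abs_deriv {f g f' : ℝ → ℝ} {ρ : ℝ} (hρ : 0 < ρ)
    (hf : Continuous f) (hgf : LeftInverse g f) (hfg : RightInverse g f)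
    (hderiv : ∀ᵐ x, HasDerivAt f (f' x) x) (hlow : ∀ᵐ x, ρ ≤ |f' x|) (y₁ y₂ : ℝ) :
    |g y₁ - g y₂| ≤ ρ⁻¹ * |y₁ - y₂| := by
  rw [inv_mul_eq_div, le_div_iff₀' hρ]
  simpa only [hfg _] using mul_abs_sub_le_abs_sub_of_le_abs_deriv hρ.le hf hgf.injective hderiv
    hlow (g y₁) (g y₂)

theorem ae_one_add_deriv_mem_Icc {ρ L : ℝ} {ξ ξ' : ℝ → ℝ} (hL : 0 ≤ L)
    (hlip : LipschitzWith L.toNNReal ξ) (hderiv : ∀ᵐ σ, HasDerivAt ξ (ξ' σ) σ)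
    (hlow : ∀ᵐ σ, ρ ≤ 1 + ξ' σ) : ∀ᵐ σ, 1 + ξ' σ ∈ Icc ρ (1 + L) := by
  filter_upwards [hderiv, hlow] with σ hσ hρσ
  have := (le_abs_self _).trans ((hσ.le_of_lipschitz hlip).trans_eq (Real.coe_toNNReal L hL))
  exact ⟨hρσ, by simpa using this⟩

theorem integral_sq_inverse_displacement_le {ρ L : ℝ} {ξ ξ' η : ℝ → ℝ} (hρ : 0 < ρ)
    (hL : 0 ≤ L) (hξ : Continuous ξ) (hξ' : AEMeasurable ξ')
    (hslope : ∀ᵐ σ, 1 + ξ' σ ∈ Icc ρ (1 + L))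
    (hcov : ∫ y, η y ^ 2 = ∫ σ, |1 + ξ' σ| * η (σ + ξ σ) ^ 2)
    (hη : ∀ σ, η (σ + ξ σ) = -ξ σ) :
    ∫ y, η y ^ 2 ≤ (1 + L) ^ 2 * ∫ σ, ξ σ ^ 2 := by
  calc ∫ y, η y ^ 2 = ∫ σ, |1 + ξ' σ| * ξ σ ^ 2 := by simp only [hcov, hη, neg_sq]
    _ ≤ (1 + L) * ∫ σ, ξ σ ^ 2 := by
      refine integral_mul_le_mul_integral_of_ae_mem_Icc hρ (by fun_prop) (by fun_prop)
        (.of_forall fun _ => sq_nonneg _) ?_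
      filter_upwards [hslope] with σ hσ
      rwa [abs_of_pos (hρ.trans_le hσ.1)]
    _ ≤ (1 + L) ^ 2 * ∫ σ, ξ σ ^ 2 :=
      mul_le_mul_of_nonneg_right (by nlinarith) (integral_nonneg fun _ => sq_nonneg _)

theorem integral_sq_deriv_inverse_displacement_le {ρ L : ℝ} {ξ ξ' η' : ℝ → ℝ} (hρ : 0 < ρ)
    (hL : 0 ≤ L) (hξ' : AEMeasurable ξ') (hslope : ∀ᵐ σ, 1 + ξ' σ ∈ Icc ρ (1 + L))
    (hcov : ∫ y, η' y ^ 2 = ∫ σ, |1 + ξ' σ| * η' (σ + ξ σ) ^ 2)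
    (hη' : ∀ᵐ σ, η' (σ + ξ σ) + 1 = (1 + ξ' σ)⁻¹) :
    ∫ y, η' y ^ 2 ≤ ρ⁻¹ * ∫ σ, ξ' σ ^ 2 := by
  calc ∫ y, η' y ^ 2 = ∫ σ, (1 + ξ' σ)⁻¹ * ξ' σ ^ 2 := by
        rw [hcov]
        refine integral_congr_ae ?_
        filter_upwards [hη', hslope] with σ hσ hslopeσ
        have hpos : 0 < 1 + ξ' σ := hρ.trans_le hslopeσ.1
        rw [eq_sub_of_add_eq hσ, abs_of_pos hpos]
        field_simp
        ring
    _ ≤ ρ⁻¹ * ∫ σ, ξ' σ ^ 2 := by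
      refine integral_mul_le_mul_integral_of_ae_mem_Icc (c := (1 + L)⁻¹) (by positivity)
        (by fun_prop) (by fun_prop) (.of_forall fun _ => sq_nonneg _) ?_
      filter_upwards [hslope] with σ hσ
      exact ⟨inv_anti₀ (hρ.trans_le hσ.1) hσ.2, inv_anti₀ hρ hσ.1⟩

/-- Properties of the inverse displacement `η(y) = s(y) − y` of the
deformation `x(s) = s + ξ(s)`: the identity `η = −ξ ∘ s`, equality of sup norms,
the Lipschitz bound with constant `ρ⁻¹·L`, and the `L²` bounds for `η` and `η'`. -/
theorem stmt_5 (ρ L : ℝ) (hρ : 0 < ρ) (hL : 0 ≤ L) (ξ ξ' : ℝ → ℝ)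
    (hlip : ∀ a b : ℝ, |ξ a - ξ b| ≤ L * |a - b|)
    (hderiv : ∀ᵐ σ ∂volume, HasDerivAt ξ (ξ' σ) σ)
    (hlow : ∀ᵐ σ ∂volume, ρ ≤ 1 + ξ' σ)
    (x sInv : ℝ → ℝ) (hx : ∀ s, x s = s + ξ s)
    (hinv₁ : ∀ σ, sInv (x σ) = σ) (hinv₂ : ∀ y, x (sInv y) = y)
    (η η' : ℝ → ℝ) (hη : ∀ y, η y = sInv y - y)
    (hηderiv : ∀ᵐ y ∂volume, HasDerivAt η (η' y) y) :
    (∀ y, η y = -ξ (sInv y)) ∧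
    ((⨆ y, |η y|) = ⨆ σ, |ξ σ|) ∧
    (∀ y₁ y₂ : ℝ, |η y₁ - η y₂| ≤ ρ⁻¹ * L * |y₁ - y₂|) ∧
    ((∫ y, (η y) ^ 2) ≤ (1 + L) ^ 2 * ∫ σ, (ξ σ) ^ 2) ∧
    ((∫ y, (η' y) ^ 2) ≤ ρ⁻¹ * ∫ σ, (ξ' σ) ^ 2) := by
  obtain rfl : x = fun s => s + ξ s := funext hx
  have hη_eq (y : ℝ) : η y = -ξ (sInv y) := by linarith [hη y, hinv₂ y]
  have hξ_lip : LipschitzWith L.toNNReal ξ :=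
    .of_dist_le' fun a b => by simpa only [Real.dist_eq] using hlip a b
  have hx_lip : LipschitzWith (1 + L.toNNReal) fun s => s + ξ s := LipschitzWith.id.add hξ_lip
  have hx_deriv : ∀ᵐ σ, HasDerivAt (fun s => s + ξ s) (1 + ξ' σ) σ :=
    hderiv.mono fun σ h => (hasDerivAt_id σ).add h
  have hslope := ae_one_add_deriv_mem_Icc hL hξ_lip hderiv hlow
  have hsInv := abs_sub_le_inv_mul_of_le_abs_deriv hρ hx_lip.continuous hinv₁ hinv₂
    hx_deriv (hslope.mono fun _ h => h.1.trans (le_abs_self _))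
  have hsInv_deriv : ∀ᵐ y, HasDerivAt sInv (η' y + 1) y := hηderiv.mono fun y h => by
    rw [show sInv = fun y => η y + y from funext fun y => by rw [hη]; ring]
    exact h.add (hasDerivAt_id' y)
  have hcov := integral_eq_integral_abs_deriv_mul_comp hx_lip hinv₁ hinv₂ hx_deriv
  have hξ' : AEMeasurable ξ' :=
    (measurable_deriv ξ).aemeasurable.congr (hderiv.mono fun _ h => h.deriv)
  refine ⟨hη_eq, ?_, fun y₁ y₂ => ?_, ?_, ?_⟩
  · simp_rw [hη_eq, abs_neg]
    exact (LeftInverse.surjective hinv₁).iSup_comp fun σ => |ξ σ|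
  · calc |η y₁ - η y₂| = |ξ (sInv y₁) - ξ (sInv y₂)| := by
          rw [hη_eq, hη_eq, neg_sub_neg, abs_sub_comm]
      _ ≤ L * (ρ⁻¹ * |y₁ - y₂|) := (hlip _ _).trans (mul_le_mul_of_nonneg_left (hsInv y₁ y₂) hL)
      _ = ρ⁻¹ * L * |y₁ - y₂| := by ring
  · exact integral_sq_inverse_displacement_le hρ hL hξ_lip.continuous hξ' hslope (hcov _)
      fun σ => by rw [hη_eq, hinv₁]
  · have hsInv_lip : LipschitzWith ρ⁻¹.toNNReal sInv :=
      .of_dist_le' fun a b => by simpa only [Real.dist_eq] using hsInv a b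
    exact integral_sq_deriv_inverse_displacement_le hρ hL hξ' hslope (hcov _)
      (ae_deriv_comp_eq_inv_of_leftInverse hsInv_lip hinv₁ hinv₂ hx_deriv
        (hslope.mono fun _ h => (hρ.trans_le h.1).ne') hsInv_deriv)
end

section
/- Let ρ > 0 and, for j = 1, 2, let ξⱼ : ℝ → ℝ be Lipschitz with constant Lⱼ such that ρ ≤ 1 + ξⱼ′(σ) for almost every σ ∈ ℝ; set xⱼ(s) = s + ξⱼ(s) with inverse sⱼ(·) and ηⱼ(y) = sⱼ(y) − y. Then: (i) ρ·|η₁(y) − η₂(y)| ≤ (1/2)|ξ₁(s₁(y)) − ξ₂(s₁(y))| + (1/2)|ξ₁(s₂(y)) − ξ₂(s₂(y))| for every y; in particular (ii) sup_y |η₁(y) − η₂(y)| ≤ ρ⁻¹ sup_σ |ξ₁(σ) − ξ₂(σ)|, and (iii) ρ·(∫ (η₁ − η₂)² dy)^{1/2} ≤ ((1 + L₁)^{1/2} + (1 + L₂)^{1/2})·(∫ (ξ₁ − ξ₂)² dσ)^{1/2}. -/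
/-!
Write `xⱼ σ = σ + ξⱼ σ`. Integrating `ρ ≤ xⱼ'` by the fundamental theorem of calculus for the
absolutely continuous (Lipschitz) `xⱼ` shows that `xⱼ` is expanding, `ρ |a - b| ≤ |xⱼ a - xⱼ b|`,
while it is `(1 + Lⱼ)`-Lipschitz. Since `x₁ (s₁ y) = y = x₂ (s₂ y)`,
`ξ₁ (s₁ y) - ξ₂ (s₁ y) = x₂ (s₂ y) - x₂ (s₁ y)`, so `ρ |s₁ y - s₂ y| ≤ |(ξ₁ - ξ₂) (s₁ y)|
≤ (1 + L₂) |s₁ y - s₂ y|`, and symmetrically at `s₂ y`; this gives the pointwise and sup bounds.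
For the `L²` bound, substitute `y = x₁ σ`: as `x₁` and `s₁` are Lipschitz with constants `1 + L₁`
and `ρ⁻¹`, this changes Lebesgue measure by a factor between `ρ` and `1 + L₁`. The two-sided
pointwise bound makes both integrands integrable or both not, which matters because the Bochner
integral of a non-integrable function is `0`.
-/

open MeasureTheory
open scoped NNReal ENNReal

theorem LipschitzWith.volume_image_le {f : ℝ → ℝ} {K : ℝ≥0} (hf : LipschitzWith K f)
    (s : Set ℝ) : volume (f '' s) ≤ K * volume s := by
  simpa [hausdorffMeasure_real] using hf.hausdorffMeasure_image_le zero_le_one s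

theorem LipschitzWith.mul_sub_le_sub_of_ae_le_deriv {f f' : ℝ → ℝ} {K : ℝ≥0} {c a b : ℝ}
    (hf : LipschitzWith K f) (hderiv : ∀ᵐ x, HasDerivAt f (f' x) x) (hle : ∀ᵐ x, c ≤ f' x)
    (hab : a ≤ b) : c * (b - a) ≤ f b - f a := by
  have hac := (hf.lipschitzOnWith (s := Set.uIcc a b)).absolutelyContinuousOnInterval
  calc c * (b - a) = ∫ _ in a..b, c := by simp [mul_comm]
    _ ≤ ∫ x in a..b, deriv f x :=
      intervalIntegral.integral_mono_ae hab intervalIntegrable_const hac.intervalIntegrable_deriv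
        (by filter_upwards [hderiv, hle] with x hx hcx; rwa [hx.deriv])
    _ = f b - f a := hac.integral_deriv_eq_sub

theorem lintegral_comp_le_of_lipschitzWith_leftInverse {f g : ℝ → ℝ} {K : ℝ≥0} (hf : Measurable f)
    (hg : LipschitzWith K g) (hgf : Function.LeftInverse g f) {F : ℝ → ℝ≥0∞}
    (hF : Measurable F) : ∫⁻ y, F (f y) ≤ K * ∫⁻ σ, F σ := by
  have hmap : Measure.map f volume ≤ (K : ℝ≥0∞) • volume := by
    refine Measure.le_iff.2 fun E hE => ?_
    rw [Measure.map_apply hf hE, Measure.smul_apply, smul_eq_mul]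
    exact (measure_mono (show f ⁻¹' E ⊆ g '' E from fun y hy => ⟨f y, hy, hgf y⟩)).trans
      (hg.volume_image_le E)
  calc ∫⁻ y, F (f y) = ∫⁻ σ, F σ ∂Measure.map f volume := (lintegral_map hF hf).symm
    _ ≤ ∫⁻ σ, F σ ∂((K : ℝ≥0∞) • volume) := lintegral_mono' hmap le_rfl
    _ = K * ∫⁻ σ, F σ := lintegral_smul_measure _ _

theorem mul_integral_le_mul_integral_of_lintegral_le {α : Type*} [MeasurableSpace α]
    {μ : Measure α} {f g : α → ℝ} {a b : ℝ} {c : ℝ≥0∞} (hf : 0 ≤ f) (hg : 0 ≤ g)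
    (hfm : AEStronglyMeasurable f μ) (hgm : AEStronglyMeasurable g μ) (ha : 0 ≤ a) (hb : 0 ≤ b)
    (hle : ENNReal.ofReal a * ∫⁻ x, ENNReal.ofReal (f x) ∂μ ≤
      ENNReal.ofReal b * ∫⁻ x, ENNReal.ofReal (g x) ∂μ)
    (hc : c ≠ ∞) (hge : ∫⁻ x, ENNReal.ofReal (g x) ∂μ ≤ c * ∫⁻ x, ENNReal.ofReal (f x) ∂μ) :
    a * ∫ x, f x ∂μ ≤ b * ∫ x, g x ∂μ := by
  rw [integral_eq_lintegral_of_nonneg_ae (ae_of_all _ hf) hfm,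
    integral_eq_lintegral_of_nonneg_ae (ae_of_all _ hg) hgm]
  rcases eq_or_ne (∫⁻ x, ENNReal.ofReal (g x) ∂μ) ∞ with hG | hG
  · have hF : ∫⁻ x, ENNReal.ofReal (f x) ∂μ = ∞ := by
      by_contra hF
      exact ENNReal.mul_ne_top hc hF (top_le_iff.1 (hG ▸ hge))
    simp [hF, hG]
  · have := ENNReal.toReal_mono (ENNReal.mul_ne_top ENNReal.ofReal_ne_top hG) hle
    rwa [ENNReal.toReal_mul, ENNReal.toReal_mul, ENNReal.toReal_ofReal ha,
      ENNReal.toReal_ofReal hb] at this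

theorem mul_abs_sub_le_abs_add_sub {ρ : ℝ} {K : ℝ≥0} {ξ ξ' : ℝ → ℝ} (hξ : LipschitzWith K ξ)
    (hderiv : ∀ᵐ σ, HasDerivAt ξ (ξ' σ) σ) (hlow : ∀ᵐ σ, ρ ≤ 1 + ξ' σ) (a b : ℝ) :
    ρ * |a - b| ≤ |a + ξ a - (b + ξ b)| := by
  wlog hab : a ≤ b generalizing a b
  · simpa only [abs_sub_comm] using this b a (le_of_not_ge hab)
  have hx : LipschitzWith (1 + K) (fun σ => σ + ξ σ) := LipschitzWith.id.add hξ
  have := hx.mul_sub_le_sub_of_ae_le_deriv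
    (hderiv.mono fun σ h => (hasDerivAt_id σ).add h) hlow hab
  rw [abs_sub_comm, abs_of_nonneg (sub_nonneg.2 hab), abs_sub_comm]
  exact this.trans (le_abs_self _)

theorem lipschitzWith_rightInverse_of_mul_abs_sub_le {ρ : ℝ} {ξ s : ℝ → ℝ} (hρ : 0 < ρ)
    (hexp : ∀ a b, ρ * |a - b| ≤ |a + ξ a - (b + ξ b)|) (hinv' : ∀ y, s y + ξ (s y) = y) :
    LipschitzWith (Real.toNNReal ρ⁻¹) s := by
  refine LipschitzWith.of_dist_le' fun y z => ?_
  rw [Real.dist_eq, Real.dist_eq, le_inv_mul_iff₀ hρ]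
  simpa only [hinv'] using hexp (s y) (s z)

theorem iSup_ofReal_le_inv_mul_iSup_ofReal {ι κ : Sort*} {ρ : ℝ} {f : ι → ℝ} {g : κ → ℝ}
    (φ : ι → κ) (hρ : 0 < ρ) (h : ∀ i, ρ * f i ≤ g (φ i)) :
    ⨆ i, ENNReal.ofReal (f i) ≤ ENNReal.ofReal ρ⁻¹ * ⨆ k, ENNReal.ofReal (g k) := by
  refine iSup_le fun i => ?_
  calc ENNReal.ofReal (f i) ≤ ENNReal.ofReal (ρ⁻¹ * g (φ i)) :=
        ENNReal.ofReal_le_ofReal ((le_inv_mul_iff₀ hρ).2 (h i))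
    _ = ENNReal.ofReal ρ⁻¹ * ENNReal.ofReal (g (φ i)) := ENNReal.ofReal_mul (inv_nonneg.2 hρ.le)
    _ ≤ ENNReal.ofReal ρ⁻¹ * ⨆ k, ENNReal.ofReal (g k) := by
      gcongr
      exact le_iSup_of_le (φ i) le_rfl

section TwoDisplacements

variable {ρ : ℝ} {K₁ K₂ : ℝ≥0} {ξ₁ ξ₂ s₁ s₂ : ℝ → ℝ}

theorem sub_comp_inverse_eq (hinv₁' : ∀ y, s₁ y + ξ₁ (s₁ y) = y)
    (hinv₂' : ∀ y, s₂ y + ξ₂ (s₂ y) = y) (y : ℝ) :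
    ξ₁ (s₁ y) - ξ₂ (s₁ y) = s₂ y + ξ₂ (s₂ y) - (s₁ y + ξ₂ (s₁ y)) := by
  linear_combination hinv₁' y - hinv₂' y

theorem mul_abs_inverse_sub_le (hexp₂ : ∀ a b, ρ * |a - b| ≤ |a + ξ₂ a - (b + ξ₂ b)|)
    (hinv₁' : ∀ y, s₁ y + ξ₁ (s₁ y) = y) (hinv₂' : ∀ y, s₂ y + ξ₂ (s₂ y) = y) (y : ℝ) :
    ρ * |s₁ y - s₂ y| ≤ |ξ₁ (s₁ y) - ξ₂ (s₁ y)| := by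
  rw [sub_comp_inverse_eq hinv₁' hinv₂', abs_sub_comm (s₁ y)]
  exact hexp₂ (s₂ y) (s₁ y)

theorem abs_sub_comp_inverse_le (hξ₂ : LipschitzWith K₂ ξ₂)
    (hinv₁' : ∀ y, s₁ y + ξ₁ (s₁ y) = y) (hinv₂' : ∀ y, s₂ y + ξ₂ (s₂ y) = y) (y : ℝ) :
    |ξ₁ (s₁ y) - ξ₂ (s₁ y)| ≤ (1 + K₂) * |s₁ y - s₂ y| := by
  have hx₂ : LipschitzWith (1 + K₂) (fun σ => σ + ξ₂ σ) := LipschitzWith.id.add hξ₂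
  rw [sub_comp_inverse_eq hinv₁' hinv₂', abs_sub_comm (s₁ y)]
  simpa only [Real.dist_eq, NNReal.coe_add, NNReal.coe_one] using hx₂.dist_le_mul (s₂ y) (s₁ y)

theorem lintegral_sq_inverse_sub_le (hρ : 0 < ρ) (hξ₁ : LipschitzWith K₁ ξ₁)
    (hξ₂ : LipschitzWith K₂ ξ₂) (hexp₁ : ∀ a b, ρ * |a - b| ≤ |a + ξ₁ a - (b + ξ₁ b)|)
    (hexp₂ : ∀ a b, ρ * |a - b| ≤ |a + ξ₂ a - (b + ξ₂ b)|)
    (hinv₁' : ∀ y, s₁ y + ξ₁ (s₁ y) = y) (hinv₂' : ∀ y, s₂ y + ξ₂ (s₂ y) = y) :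
    ENNReal.ofReal (ρ ^ 2) * ∫⁻ y, ENNReal.ofReal ((s₁ y - s₂ y) ^ 2) ≤
      ENNReal.ofReal (1 + K₁) * ∫⁻ σ, ENNReal.ofReal ((ξ₁ σ - ξ₂ σ) ^ 2) := by
  have hs₁ := lipschitzWith_rightInverse_of_mul_abs_sub_le hρ hexp₁ hinv₁'
  have hG : Measurable fun σ => ENNReal.ofReal ((ξ₁ σ - ξ₂ σ) ^ 2) :=
    ((hξ₁.continuous.sub hξ₂.continuous).pow 2).measurable.ennreal_ofReal
  have hsq : ∀ y, ρ ^ 2 * (s₁ y - s₂ y) ^ 2 ≤ (ξ₁ (s₁ y) - ξ₂ (s₁ y)) ^ 2 := fun y => by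
    rw [← mul_pow, sq_le_sq, abs_mul, abs_of_pos hρ]
    exact mul_abs_inverse_sub_le hexp₂ hinv₁' hinv₂' y
  calc ENNReal.ofReal (ρ ^ 2) * ∫⁻ y, ENNReal.ofReal ((s₁ y - s₂ y) ^ 2)
      = ∫⁻ y, ENNReal.ofReal (ρ ^ 2 * (s₁ y - s₂ y) ^ 2) := by
        simp only [ENNReal.ofReal_mul (sq_nonneg ρ), lintegral_const_mul' _ _ ENNReal.ofReal_ne_top]
    _ ≤ ∫⁻ y, ENNReal.ofReal ((ξ₁ (s₁ y) - ξ₂ (s₁ y)) ^ 2) :=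
        lintegral_mono fun y => ENNReal.ofReal_le_ofReal (hsq y)
    _ ≤ (1 + K₁ : ℝ≥0) * ∫⁻ σ, ENNReal.ofReal ((ξ₁ σ - ξ₂ σ) ^ 2) :=
        lintegral_comp_le_of_lipschitzWith_leftInverse hs₁.continuous.measurable
          (LipschitzWith.id.add hξ₁) hinv₁' hG
    _ = ENNReal.ofReal (1 + K₁) * ∫⁻ σ, ENNReal.ofReal ((ξ₁ σ - ξ₂ σ) ^ 2) := by
        rw [← ENNReal.ofReal_coe_nnreal, NNReal.coe_add, NNReal.coe_one]

theorem lintegral_sq_sub_le_inverse (hρ : 0 < ρ) (hξ₁ : LipschitzWith K₁ ξ₁)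
    (hξ₂ : LipschitzWith K₂ ξ₂) (hexp₁ : ∀ a b, ρ * |a - b| ≤ |a + ξ₁ a - (b + ξ₁ b)|)
    (hinv₁ : ∀ σ, s₁ (σ + ξ₁ σ) = σ) (hinv₁' : ∀ y, s₁ y + ξ₁ (s₁ y) = y)
    (hinv₂' : ∀ y, s₂ y + ξ₂ (s₂ y) = y) :
    ∫⁻ σ, ENNReal.ofReal ((ξ₁ σ - ξ₂ σ) ^ 2) ≤
      ENNReal.ofReal ρ⁻¹ * ENNReal.ofReal ((1 + K₂) ^ 2) *
        ∫⁻ y, ENNReal.ofReal ((s₁ y - s₂ y) ^ 2) := by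
  have hs₁ := lipschitzWith_rightInverse_of_mul_abs_sub_le hρ hexp₁ hinv₁'
  have hGs : Measurable fun y => ENNReal.ofReal ((ξ₁ (s₁ y) - ξ₂ (s₁ y)) ^ 2) :=
    (((hξ₁.continuous.sub hξ₂.continuous).comp hs₁.continuous).pow 2).measurable.ennreal_ofReal
  have hsq : ∀ y, (ξ₁ (s₁ y) - ξ₂ (s₁ y)) ^ 2 ≤ (1 + K₂) ^ 2 * (s₁ y - s₂ y) ^ 2 := fun y => by
    rw [← mul_pow, sq_le_sq, abs_mul, abs_of_pos (show (0 : ℝ) < 1 + K₂ by positivity)]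
    exact abs_sub_comp_inverse_le hξ₂ hinv₁' hinv₂' y
  calc ∫⁻ σ, ENNReal.ofReal ((ξ₁ σ - ξ₂ σ) ^ 2)
      ≤ ENNReal.ofReal ρ⁻¹ * ∫⁻ y, ENNReal.ofReal ((ξ₁ (s₁ y) - ξ₂ (s₁ y)) ^ 2) := by
        have h := lintegral_comp_le_of_lipschitzWith_leftInverse
          (LipschitzWith.id.add hξ₁).continuous.measurable hs₁ hinv₁ hGs
        simp only [id, hinv₁] at h
        exact h
    _ ≤ ENNReal.ofReal ρ⁻¹ * ∫⁻ y, ENNReal.ofReal ((1 + K₂) ^ 2 * (s₁ y - s₂ y) ^ 2) := by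
        gcongr with y
        exact hsq y
    _ = _ := by
        simp only [ENNReal.ofReal_mul (sq_nonneg (1 + (K₂ : ℝ))), mul_assoc,
          lintegral_const_mul' _ _ ENNReal.ofReal_ne_top]

theorem mul_sqrt_integral_sq_inverse_sub_le (hρ : 0 < ρ) (hξ₁ : LipschitzWith K₁ ξ₁)
    (hξ₂ : LipschitzWith K₂ ξ₂) (hexp₁ : ∀ a b, ρ * |a - b| ≤ |a + ξ₁ a - (b + ξ₁ b)|)
    (hexp₂ : ∀ a b, ρ * |a - b| ≤ |a + ξ₂ a - (b + ξ₂ b)|) (hinv₁ : ∀ σ, s₁ (σ + ξ₁ σ) = σ)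
    (hinv₁' : ∀ y, s₁ y + ξ₁ (s₁ y) = y) (hinv₂' : ∀ y, s₂ y + ξ₂ (s₂ y) = y) :
    ρ * √(∫ y, (s₁ y - s₂ y) ^ 2) ≤ √(1 + K₁) * √(∫ σ, (ξ₁ σ - ξ₂ σ) ^ 2) := by
  have hs₁ := lipschitzWith_rightInverse_of_mul_abs_sub_le hρ hexp₁ hinv₁'
  have hs₂ := lipschitzWith_rightInverse_of_mul_abs_sub_le hρ hexp₂ hinv₂'
  have hint : ρ ^ 2 * ∫ y, (s₁ y - s₂ y) ^ 2 ≤ (1 + K₁) * ∫ σ, (ξ₁ σ - ξ₂ σ) ^ 2 :=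
    mul_integral_le_mul_integral_of_lintegral_le (fun _ => sq_nonneg _) (fun _ => sq_nonneg _)
      ((hs₁.continuous.sub hs₂.continuous).pow 2).aestronglyMeasurable
      ((hξ₁.continuous.sub hξ₂.continuous).pow 2).aestronglyMeasurable (sq_nonneg ρ)
      (by positivity) (lintegral_sq_inverse_sub_le hρ hξ₁ hξ₂ hexp₁ hexp₂ hinv₁' hinv₂')
      (by finiteness) (lintegral_sq_sub_le_inverse hρ hξ₁ hξ₂ hexp₁ hinv₁ hinv₁' hinv₂')
  calc ρ * √(∫ y, (s₁ y - s₂ y) ^ 2) = √(ρ ^ 2 * ∫ y, (s₁ y - s₂ y) ^ 2) := by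
        rw [Real.sqrt_mul (sq_nonneg ρ), Real.sqrt_sq hρ.le]
    _ ≤ √((1 + K₁) * ∫ σ, (ξ₁ σ - ξ₂ σ) ^ 2) := Real.sqrt_le_sqrt hint
    _ = √(1 + K₁) * √(∫ σ, (ξ₁ σ - ξ₂ σ) ^ 2) := Real.sqrt_mul (by positivity) _

end TwoDisplacements

theorem stmt_6_general (ρ L₁ L₂ : ℝ) (hρ : 0 < ρ) (hL₁ : 0 ≤ L₁) (hL₂ : 0 ≤ L₂)
    (ξ₁ ξ₂ ξ₁' ξ₂' : ℝ → ℝ)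
    (hlip₁ : ∀ a b : ℝ, |ξ₁ a - ξ₁ b| ≤ L₁ * |a - b|)
    (hlip₂ : ∀ a b : ℝ, |ξ₂ a - ξ₂ b| ≤ L₂ * |a - b|)
    (hderiv₁ : ∀ᵐ σ ∂volume, HasDerivAt ξ₁ (ξ₁' σ) σ)
    (hderiv₂ : ∀ᵐ σ ∂volume, HasDerivAt ξ₂ (ξ₂' σ) σ)
    (hlow₁ : ∀ᵐ σ ∂volume, ρ ≤ 1 + ξ₁' σ)
    (hlow₂ : ∀ᵐ σ ∂volume, ρ ≤ 1 + ξ₂' σ)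
    (s₁ s₂ : ℝ → ℝ)
    (hinv₁ : ∀ σ, s₁ (σ + ξ₁ σ) = σ) (hinv₁' : ∀ y, s₁ y + ξ₁ (s₁ y) = y)
    (hinv₂' : ∀ y, s₂ y + ξ₂ (s₂ y) = y)
    (η₁ η₂ : ℝ → ℝ) (hη₁ : ∀ y, η₁ y = s₁ y - y) (hη₂ : ∀ y, η₂ y = s₂ y - y) :
    (∀ y : ℝ, ρ * |η₁ y - η₂ y| ≤
      (1 / 2) * |ξ₁ (s₁ y) - ξ₂ (s₁ y)| + (1 / 2) * |ξ₁ (s₂ y) - ξ₂ (s₂ y)|) ∧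
    ((⨆ y, ENNReal.ofReal |η₁ y - η₂ y|) ≤
      ENNReal.ofReal ρ⁻¹ * ⨆ σ, ENNReal.ofReal |ξ₁ σ - ξ₂ σ|) ∧
    (ρ * Real.sqrt (∫ y, (η₁ y - η₂ y) ^ 2) ≤
      (Real.sqrt (1 + L₁) + Real.sqrt (1 + L₂)) *
        Real.sqrt (∫ σ, (ξ₁ σ - ξ₂ σ) ^ 2)) := by
  have hξ₁ : LipschitzWith ⟨L₁, hL₁⟩ ξ₁ := LipschitzWith.of_dist_le_mul hlip₁
  have hξ₂ : LipschitzWith ⟨L₂, hL₂⟩ ξ₂ := LipschitzWith.of_dist_le_mul hlip₂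
  have hexp₁ := mul_abs_sub_le_abs_add_sub hξ₁ hderiv₁ hlow₁
  have hexp₂ := mul_abs_sub_le_abs_add_sub hξ₂ hderiv₂ hlow₂
  have hη : ∀ y, η₁ y - η₂ y = s₁ y - s₂ y := fun y => by
    rw [hη₁, hη₂, sub_sub_sub_cancel_right]
  have hgap₁ : ∀ y, ρ * |η₁ y - η₂ y| ≤ |ξ₁ (s₁ y) - ξ₂ (s₁ y)| := fun y => by
    rw [hη]
    exact mul_abs_inverse_sub_le hexp₂ hinv₁' hinv₂' y
  have hgap₂ : ∀ y, ρ * |η₁ y - η₂ y| ≤ |ξ₁ (s₂ y) - ξ₂ (s₂ y)| := fun y => by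
    rw [hη, abs_sub_comm, abs_sub_comm (ξ₁ _)]
    exact mul_abs_inverse_sub_le hexp₁ hinv₂' hinv₁' y
  refine ⟨fun y => by linarith [hgap₁ y, hgap₂ y],
    iSup_ofReal_le_inv_mul_iSup_ofReal s₁ hρ hgap₁, ?_⟩
  calc ρ * √(∫ y, (η₁ y - η₂ y) ^ 2) ≤ √(1 + L₁) * √(∫ σ, (ξ₁ σ - ξ₂ σ) ^ 2) := by
        simp only [hη]
        exact mul_sqrt_integral_sq_inverse_sub_le hρ hξ₁ hξ₂ hexp₁ hexp₂ hinv₁ hinv₁' hinv₂'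
    _ ≤ (√(1 + L₁) + √(1 + L₂)) * √(∫ σ, (ξ₁ σ - ξ₂ σ) ^ 2) := by
        gcongr
        exact le_add_of_nonneg_right (Real.sqrt_nonneg _)

/-- Continuity estimates for the inverse displacement map `ξ ↦ η = Sξ`:
pointwise, sup-norm, and `L²` bounds for the difference of two inverse displacements. -/
theorem stmt_6 (ρ L₁ L₂ : ℝ) (hρ : 0 < ρ) (hL₁ : 0 ≤ L₁) (hL₂ : 0 ≤ L₂)
    (ξ₁ ξ₂ ξ₁' ξ₂' : ℝ → ℝ)
    (hlip₁ : ∀ a b : ℝ, |ξ₁ a - ξ₁ b| ≤ L₁ * |a - b|)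
    (hlip₂ : ∀ a b : ℝ, |ξ₂ a - ξ₂ b| ≤ L₂ * |a - b|)
    (hderiv₁ : ∀ᵐ σ ∂volume, HasDerivAt ξ₁ (ξ₁' σ) σ)
    (hderiv₂ : ∀ᵐ σ ∂volume, HasDerivAt ξ₂ (ξ₂' σ) σ)
    (hlow₁ : ∀ᵐ σ ∂volume, ρ ≤ 1 + ξ₁' σ)
    (hlow₂ : ∀ᵐ σ ∂volume, ρ ≤ 1 + ξ₂' σ)
    (s₁ s₂ : ℝ → ℝ)
    (hinv₁ : ∀ σ, s₁ (σ + ξ₁ σ) = σ) (hinv₁' : ∀ y, s₁ y + ξ₁ (s₁ y) = y)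
    (hinv₂ : ∀ σ, s₂ (σ + ξ₂ σ) = σ) (hinv₂' : ∀ y, s₂ y + ξ₂ (s₂ y) = y)
    (η₁ η₂ : ℝ → ℝ) (hη₁ : ∀ y, η₁ y = s₁ y - y) (hη₂ : ∀ y, η₂ y = s₂ y - y) :
    (∀ y : ℝ, ρ * |η₁ y - η₂ y| ≤
      (1 / 2) * |ξ₁ (s₁ y) - ξ₂ (s₁ y)| + (1 / 2) * |ξ₁ (s₂ y) - ξ₂ (s₂ y)|) ∧
    ((⨆ y, ENNReal.ofReal |η₁ y - η₂ y|) ≤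
      ENNReal.ofReal ρ⁻¹ * ⨆ σ, ENNReal.ofReal |ξ₁ σ - ξ₂ σ|) ∧
    (ρ * Real.sqrt (∫ y, (η₁ y - η₂ y) ^ 2) ≤
      (Real.sqrt (1 + L₁) + Real.sqrt (1 + L₂)) *
        Real.sqrt (∫ σ, (ξ₁ σ - ξ₂ σ) ^ 2)) :=
  stmt_6_general ρ L₁ L₂ hρ hL₁ hL₂ ξ₁ ξ₂ ξ₁' ξ₂' hlip₁ hlip₂ hderiv₁ hderiv₂ hlow₁ hlow₂ s₁ s₂
    hinv₁ hinv₁' hinv₂' η₁ η₂ hη₁ hη₂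
end

section
/- Let ρ > 0 and, for j = 1, 2, let ξⱼ : ℝ → ℝ be Lipschitz such that ρ ≤ 1 + ξⱼ′(σ) for almost every σ ∈ ℝ; set xⱼ(s) = s + ξⱼ(s) with inverse sⱼ(·). Then for almost every y ∈ ℝ, both inverses are differentiable at y and |s₁′(y) − s₂′(y)| ≤ ρ⁻²·|ξ₁′(s₁(y)) − ξ₂′(s₂(y))|. -/
/-!
Since `ρ ≤ 1 + ξⱼ'` a.e., the Lipschitz map `xⱼ = id + ξⱼ` is strictly increasing, so its inverse
`sⱼ` is continuous, and the inverse function theorem gives `sⱼ'(y) = (1 + ξⱼ'(sⱼ y))⁻¹` wherever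
`sⱼ y` is a good point of `ξⱼ`. The bad points form a null set, and the preimage of a null set
under `sⱼ` is its image under the Lipschitz map `xⱼ`, hence null again. The estimate is then
`|a⁻¹ - b⁻¹| = |a - b| / (a b) ≤ ρ⁻² |a - b|` for `a, b ≥ ρ`.
-/

open MeasureTheory Function

theorem abs_inv_sub_inv_le_of_le {ρ a b : ℝ} (hρ : 0 < ρ) (ha : ρ ≤ a) (hb : ρ ≤ b) :
    |a⁻¹ - b⁻¹| ≤ ρ⁻¹ ^ 2 * |a - b| := by
  have ha₀ : 0 < a := hρ.trans_le ha
  have hb₀ : 0 < b := hρ.trans_le hb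
  rw [inv_sub_inv ha₀.ne' hb₀.ne', abs_div, abs_sub_comm, abs_of_pos (mul_pos ha₀ hb₀),
    inv_pow, ← div_eq_inv_mul]
  exact div_le_div_of_nonneg_left (abs_nonneg _) (by positivity) (by nlinarith)

theorem strictMono_of_injective_of_hasDerivAt_pos {f : ℝ → ℝ} {f' a : ℝ} (hc : Continuous f)
    (hinj : Injective f) (hd : HasDerivAt f f' a) (hpos : 0 < f') : StrictMono f :=
  (hc.strictMono_of_inj hinj).resolve_right fun hanti ↦
    (hd.nonpos_of_antitone hanti.antitone).not_gt hpos

namespace LipschitzWith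

variable {K : NNReal} {x : ℝ → ℝ}

theorem volume_image_eq_zero (hx : LipschitzWith K x) {N : Set ℝ} (hN : volume N = 0) :
    volume (x '' N) = 0 := by
  have h := hx.hausdorffMeasure_image_le zero_le_one N
  rw [hausdorffMeasure_real, hN, mul_zero] at h
  exact nonpos_iff_eq_zero.mp h

theorem ae_comp_of_rightInverse (hx : LipschitzWith K x) {s : ℝ → ℝ} (hxs : RightInverse s x)
    {p : ℝ → Prop} (hp : ∀ᵐ σ, p σ) : ∀ᵐ y, p (s y) :=
  measure_mono_null (fun y hy ↦ (⟨s y, hy, hxs y⟩ : y ∈ x '' {σ | ¬p σ}))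
    (hx.volume_image_eq_zero hp)

theorem ae_hasDerivAt_inverse (hx : LipschitzWith K x) {x' s : ℝ → ℝ}
    (hderiv : ∀ᵐ σ, HasDerivAt x (x' σ) σ) (hpos : ∀ᵐ σ, 0 < x' σ)
    (hsx : LeftInverse s x) (hxs : RightInverse s x) :
    ∀ᵐ y, HasDerivAt s (x' (s y))⁻¹ y := by
  obtain ⟨σ₀, hd₀, hpos₀⟩ := (hderiv.and hpos).exists
  have hmono : StrictMono x :=
    strictMono_of_injective_of_hasDerivAt_pos hx.continuous hsx.injective hd₀ hpos₀
  have hs_mono : Monotone s := fun a b hab ↦ hmono.le_iff_le.mp (by rwa [hxs a, hxs b])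
  have hs_cont : Continuous s := hs_mono.continuous_of_surjective hsx.surjective
  filter_upwards [hx.ae_comp_of_rightInverse hxs (hderiv.and hpos)] with y ⟨hd, hp⟩
  exact hd.of_local_left_inverse hs_cont.continuousAt hp.ne' (.of_forall hxs)

end LipschitzWith

theorem ae_hasDerivAt_inverse_id_add {ρ L : ℝ} {ξ ξ' s : ℝ → ℝ} (hρ : 0 < ρ)
    (hlip : ∀ a b : ℝ, |ξ a - ξ b| ≤ L * |a - b|)
    (hderiv : ∀ᵐ σ, HasDerivAt ξ (ξ' σ) σ) (hlow : ∀ᵐ σ, ρ ≤ 1 + ξ' σ)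
    (hinv : ∀ σ, s (σ + ξ σ) = σ) (hinv' : ∀ y, s y + ξ (s y) = y) :
    ∀ᵐ y, HasDerivAt s (1 + ξ' (s y))⁻¹ y ∧ ρ ≤ 1 + ξ' (s y) := by
  have hx : LipschitzWith (1 + L.toNNReal) (fun σ ↦ σ + ξ σ) :=
    LipschitzWith.id.add (LipschitzWith.of_dist_le' hlip)
  have hderiv_x : ∀ᵐ σ, HasDerivAt (fun σ ↦ σ + ξ σ) (1 + ξ' σ) σ := by
    filter_upwards [hderiv] with σ hd
    exact (hasDerivAt_id' σ).add hd
  have hpos : ∀ᵐ σ, 0 < 1 + ξ' σ := by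
    filter_upwards [hlow] with σ h
    exact hρ.trans_le h
  exact (hx.ae_hasDerivAt_inverse hderiv_x hpos hinv hinv').and
    (hx.ae_comp_of_rightInverse hinv' hlow)

theorem stmt_8_general (ρ L₁ L₂ : ℝ) (hρ : 0 < ρ)
    (ξ₁ ξ₂ ξ₁' ξ₂' : ℝ → ℝ)
    (hlip₁ : ∀ a b : ℝ, |ξ₁ a - ξ₁ b| ≤ L₁ * |a - b|)
    (hlip₂ : ∀ a b : ℝ, |ξ₂ a - ξ₂ b| ≤ L₂ * |a - b|)
    (hderiv₁ : ∀ᵐ σ ∂volume, HasDerivAt ξ₁ (ξ₁' σ) σ)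
    (hderiv₂ : ∀ᵐ σ ∂volume, HasDerivAt ξ₂ (ξ₂' σ) σ)
    (hlow₁ : ∀ᵐ σ ∂volume, ρ ≤ 1 + ξ₁' σ)
    (hlow₂ : ∀ᵐ σ ∂volume, ρ ≤ 1 + ξ₂' σ)
    (s₁ s₂ : ℝ → ℝ)
    (hinv₁ : ∀ σ, s₁ (σ + ξ₁ σ) = σ) (hinv₁' : ∀ y, s₁ y + ξ₁ (s₁ y) = y)
    (hinv₂ : ∀ σ, s₂ (σ + ξ₂ σ) = σ) (hinv₂' : ∀ y, s₂ y + ξ₂ (s₂ y) = y) :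
    ∀ᵐ y ∂volume, ∃ d₁ d₂ : ℝ, HasDerivAt s₁ d₁ y ∧ HasDerivAt s₂ d₂ y ∧
      |d₁ - d₂| ≤ ρ⁻¹ ^ 2 * |ξ₁' (s₁ y) - ξ₂' (s₂ y)| := by
  filter_upwards [ae_hasDerivAt_inverse_id_add hρ hlip₁ hderiv₁ hlow₁ hinv₁ hinv₁',
    ae_hasDerivAt_inverse_id_add hρ hlip₂ hderiv₂ hlow₂ hinv₂ hinv₂']
    with y ⟨hd₁, hlow₁⟩ ⟨hd₂, hlow₂⟩
  refine ⟨_, _, hd₁, hd₂, ?_⟩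
  simpa only [add_sub_add_left_eq_sub] using abs_inv_sub_inv_le_of_le hρ hlow₁ hlow₂

/-- For two displacements `ξ₁, ξ₂`, the inverses `s₁, s₂` of
`xⱼ(s) = s + ξⱼ(s)` are differentiable a.e. with
`|s₁'(y) − s₂'(y)| ≤ ρ⁻²·|ξ₁'(s₁(y)) − ξ₂'(s₂(y))|`. -/
theorem stmt_8 (ρ L₁ L₂ : ℝ) (hρ : 0 < ρ) (hL₁ : 0 ≤ L₁) (hL₂ : 0 ≤ L₂)
    (ξ₁ ξ₂ ξ₁' ξ₂' : ℝ → ℝ)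
    (hlip₁ : ∀ a b : ℝ, |ξ₁ a - ξ₁ b| ≤ L₁ * |a - b|)
    (hlip₂ : ∀ a b : ℝ, |ξ₂ a - ξ₂ b| ≤ L₂ * |a - b|)
    (hderiv₁ : ∀ᵐ σ ∂volume, HasDerivAt ξ₁ (ξ₁' σ) σ)
    (hderiv₂ : ∀ᵐ σ ∂volume, HasDerivAt ξ₂ (ξ₂' σ) σ)
    (hlow₁ : ∀ᵐ σ ∂volume, ρ ≤ 1 + ξ₁' σ)
    (hlow₂ : ∀ᵐ σ ∂volume, ρ ≤ 1 + ξ₂' σ)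
    (s₁ s₂ : ℝ → ℝ)
    (hinv₁ : ∀ σ, s₁ (σ + ξ₁ σ) = σ) (hinv₁' : ∀ y, s₁ y + ξ₁ (s₁ y) = y)
    (hinv₂ : ∀ σ, s₂ (σ + ξ₂ σ) = σ) (hinv₂' : ∀ y, s₂ y + ξ₂ (s₂ y) = y) :
    ∀ᵐ y ∂volume, ∃ d₁ d₂ : ℝ, HasDerivAt s₁ d₁ y ∧ HasDerivAt s₂ d₂ y ∧
      |d₁ - d₂| ≤ ρ⁻¹ ^ 2 * |ξ₁' (s₁ y) - ξ₂' (s₂ y)| :=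
  stmt_8_general ρ L₁ L₂ hρ ξ₁ ξ₂ ξ₁' ξ₂' hlip₁ hlip₂ hderiv₁ hderiv₂ hlow₁ hlow₂ s₁ s₂ hinv₁ hinv₁'
    hinv₂ hinv₂'
end

section
/- Let ρ > 0 and let ξ : ℝ → ℝ be Lipschitz such that ρ ≤ 1 + ξ′(σ) for almost every σ ∈ ℝ; set x(s) = s + ξ(s). Let M : ℝ → ℝ be measurable, bounded, and square-integrable, and define F₁(s) = −∫ G′(x(s) − x(σ))·M(σ)·(1 + ξ′(σ)) dσ with G′(y) = −(1/2)·sgn(y)·exp(−|y|) and G(y) = (1/2)·exp(−|y|). Then F₁ is Lipschitz and bounded, and for almost every s ∈ ℝ, F₁ is differentiable at s with F₁′(s) = ( M(s) − ∫ G(x(s) − x(σ))·M(σ)·(1 + ξ′(σ)) dσ )·(1 + ξ′(s)). -/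
/-!
With `W = M (1 + ξ')` and `x` increasing, `e^{-|x s - x σ|}` equals `e^{-x s} e^{x σ}` for
`σ ≤ s` and `e^{x s} e^{-x σ}` for `σ > s`. Hence `F₁ = (e^{-x} A - e^{x} B) / 2` and
`∫ G(x s - x σ) W σ dσ = (e^{-x} A + e^{x} B) / 2`, where `A s = ∫_{σ ≤ s} e^{x σ} W σ dσ` and
`B s = ∫_{σ > s} e^{-x σ} W σ dσ`. The fundamental theorem of calculus for the Lipschitz `ξ` turns
`ρ ≤ 1 + ξ'` into `ρ (b - a) ≤ x b - x a`, which gives `|A| ≤ E e^{x} / ρ` and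
`|B| ≤ E e^{-x} / ρ` for `|W| ≤ E`, so both convolutions are bounded by `E / ρ`. `A` and `B` are
primitives of locally integrable functions, so Lebesgue's differentiation theorem and the product
rule give the derivative almost everywhere. Finally `F₁` is absolutely continuous on intervals
with an a.e. bounded derivative, hence Lipschitz.
-/

open MeasureTheory Set Filter Topology

section Primitive

variable {f F : ℝ → ℝ}

theorem ae_hasDerivAt_of_sub_eq_integral (hf : LocallyIntegrable f volume)
    (hF : ∀ a b, F b - F a = ∫ σ in a..b, f σ) : ∀ᵐ s, HasDerivAt F (f s) s := by
  filter_upwards [_root_.LocallyIntegrable.ae_hasDerivAt_integral hf] with s hs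
  have hF' : F = fun t => F 0 + ∫ σ in 0..t, f σ := funext fun t => by linarith [hF 0 t]
  rw [hF']
  exact (hs 0).const_add _

theorem absolutelyContinuousOnInterval_of_sub_eq_integral (hf : LocallyIntegrable f volume)
    (hF : ∀ a b, F b - F a = ∫ σ in a..b, f σ) (a b : ℝ) :
    AbsolutelyContinuousOnInterval F a b := by
  have hF' : F = fun t => F a + ∫ σ in a..t, f σ := funext fun t => by linarith [hF a t]
  rw [hF']
  exact (LipschitzWith.const (F a)).lipschitzOnWith.absolutelyContinuousOnInterval.add
    ((hf.integrableOn_isCompact isCompact_uIcc).intervalIntegrable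
      |>.absolutelyContinuousOnInterval_intervalIntegral left_mem_uIcc)

theorem AbsolutelyContinuousOnInterval.abs_sub_le_of_ae_abs_deriv_le {a b K : ℝ}
    (hF : AbsolutelyContinuousOnInterval F a b) (hK : ∀ᵐ s, |deriv F s| ≤ K) :
    |F b - F a| ≤ K * |b - a| := by
  rw [← hF.integral_deriv_eq_sub]
  exact intervalIntegral.norm_integral_le_of_norm_le_const_ae (f := deriv F)
    (hK.mono fun s hs _ => hs)

theorem AbsolutelyContinuousOnInterval.mul_sub_le_sub_of_ae_le_deriv {a b ρ : ℝ}
    (hF : AbsolutelyContinuousOnInterval F a b) (hρ : ∀ᵐ s, ρ ≤ deriv F s) (hab : a ≤ b) :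
    ρ * (b - a) ≤ F b - F a := by
  rw [← hF.integral_deriv_eq_sub, mul_comm, ← smul_eq_mul, ← intervalIntegral.integral_const]
  exact intervalIntegral.integral_mono_ae_restrict hab intervalIntegrable_const
    hF.intervalIntegrable_deriv (ae_restrict_of_ae hρ)

end Primitive

theorem locallyIntegrable_of_forall_integrableOn_Iic {f : ℝ → ℝ}
    (hf : ∀ s, IntegrableOn f (Iic s)) : LocallyIntegrable f volume :=
  fun s => ⟨Iic (s + 1), Iic_mem_nhds (lt_add_one s), hf _⟩

theorem locallyIntegrable_of_forall_integrableOn_Ioi {f : ℝ → ℝ}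
    (hf : ∀ s, IntegrableOn f (Ioi s)) : LocallyIntegrable f volume :=
  fun s => ⟨Ioi (s - 1), Ioi_mem_nhds (sub_one_lt s), hf _⟩

theorem LocallyLipschitz.absolutelyContinuousOnInterval {f : ℝ → ℝ} (hf : LocallyLipschitz f)
    (a b : ℝ) : AbsolutelyContinuousOnInterval f a b :=
  let ⟨_, hK⟩ := hf.locallyLipschitzOn.exists_lipschitzOnWith_of_compact isCompact_uIcc
  hK.absolutelyContinuousOnInterval

theorem LipschitzWith.ae_abs_le {K : NNReal} {x x' : ℝ → ℝ} (hxK : LipschitzWith K x)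
    (hx' : ∀ᵐ s, HasDerivAt x (x' s) s) : ∀ᵐ s, |x' s| ≤ K :=
  hx'.mono fun _ hs => hs.deriv ▸ norm_deriv_le_of_lipschitz hxK

theorem LocallyLipschitz.mul_sub_le_sub_of_ae_le {x x' : ℝ → ℝ} {ρ a b : ℝ}
    (hx : LocallyLipschitz x) (hx' : ∀ᵐ s, HasDerivAt x (x' s) s) (hρ : ∀ᵐ s, ρ ≤ x' s)
    (hab : a ≤ b) : ρ * (b - a) ≤ x b - x a :=
  (hx.absolutelyContinuousOnInterval a b).mul_sub_le_sub_of_ae_le_deriv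
    (by filter_upwards [hx', hρ] with s hs hρs; rwa [hs.deriv]) hab

theorem aemeasurable_of_ae_hasDerivAt {x x' : ℝ → ℝ} (hx' : ∀ᵐ s, HasDerivAt x (x' s) s) :
    AEMeasurable x' volume :=
  (measurable_deriv x).aemeasurable.congr (hx'.mono fun _ hs => hs.deriv)

theorem integral_eq_mul_integral_Iic_add_mul_integral_Ioi {g f₁ f₂ : ℝ → ℝ} {c₁ c₂ s : ℝ}
    (h₁ : IntegrableOn f₁ (Iic s)) (h₂ : IntegrableOn f₂ (Ioi s))
    (e₁ : g =ᵐ[volume.restrict (Iic s)] fun σ => c₁ * f₁ σ)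
    (e₂ : g =ᵐ[volume.restrict (Ioi s)] fun σ => c₂ * f₂ σ) :
    ∫ σ, g σ = c₁ * (∫ σ in Iic s, f₁ σ) + c₂ * ∫ σ in Ioi s, f₂ σ := by
  rw [← intervalIntegral.integral_Iic_add_Ioi ((h₁.const_mul c₁).congr e₁.symm)
    ((h₂.const_mul c₂).congr e₂.symm), integral_congr_ae e₁, integral_congr_ae e₂,
    integral_const_mul, integral_const_mul]

theorem exp_neg_abs_sub_of_le {a b : ℝ} (h : a ≤ b) :
    Real.exp (-|b - a|) = Real.exp (-b) * Real.exp a := by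
  rw [abs_of_nonneg (sub_nonneg.2 h), ← Real.exp_add]; ring_nf

theorem exp_neg_abs_sub_of_ge {a b : ℝ} (h : b ≤ a) :
    Real.exp (-|b - a|) = Real.exp b * Real.exp (-a) := by
  rw [abs_of_nonpos (sub_nonpos.2 h), ← Real.exp_add]; ring_nf

theorem HasDerivAt.exp_neg_mul_sub_exp_mul {x L R : ℝ → ℝ} {x' w s : ℝ}
    (hx : HasDerivAt x x' s) (hL : HasDerivAt L (Real.exp (x s) * w) s)
    (hR : HasDerivAt R (-(Real.exp (-x s) * w)) s) :
    HasDerivAt (fun t => Real.exp (-x t) * L t - Real.exp (x t) * R t)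
      (2 * w - x' * (Real.exp (-x s) * L s + Real.exp (x s) * R s)) s := by
  refine ((hx.fun_neg.exp.fun_mul hL).fun_sub (hx.exp.fun_mul hR)).congr_deriv ?_
  have h : Real.exp (-x s) * Real.exp (x s) = 1 := by
    rw [← Real.exp_add, neg_add_cancel, Real.exp_zero]
  linear_combination (2 * w) * h

noncomputable section GreenKernel

/-- The paper's `G`, the Green's function of `1 - d²/dy²`; `greenDeriv` is its `G'`, which takes
the value `0` at the kink `y = 0`. -/
def green (y : ℝ) : ℝ := 1 / 2 * Real.exp (-|y|)

def greenDeriv (y : ℝ) : ℝ := -(1 / 2) * Real.sign y * Real.exp (-|y|)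

def leftIntegral (x W : ℝ → ℝ) (s : ℝ) : ℝ := ∫ σ in Iic s, Real.exp (x σ) * W σ

def rightIntegral (x W : ℝ → ℝ) (s : ℝ) : ℝ := ∫ σ in Ioi s, Real.exp (-x σ) * W σ

variable {ρ E : ℝ} {x W : ℝ → ℝ}

theorem monotone_of_mul_sub_le (hρ : 0 ≤ ρ) (hx : ∀ a b, a ≤ b → ρ * (b - a) ≤ x b - x a) :
    Monotone x :=
  fun a b hab => by nlinarith [hx a b hab, mul_nonneg hρ (sub_nonneg.2 hab)]

variable (hρ : 0 < ρ) (hx : ∀ a b, a ≤ b → ρ * (b - a) ≤ x b - x a)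
  (hW : AEStronglyMeasurable W volume) (hWE : ∀ᵐ σ, |W σ| ≤ E)

section
include hx hWE

theorem ae_norm_exp_mul_le_Iic (s : ℝ) :
    ∀ᵐ σ ∂volume.restrict (Iic s),
      ‖Real.exp (x σ) * W σ‖ ≤ E * Real.exp (x s - ρ * s) * Real.exp (ρ * σ) := by
  filter_upwards [ae_restrict_mem measurableSet_Iic, ae_restrict_of_ae hWE] with σ hσ hWσ
  have : x σ ≤ x s - ρ * s + ρ * σ := by linarith [hx σ s hσ]
  calc ‖Real.exp (x σ) * W σ‖ = Real.exp (x σ) * |W σ| := by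
        rw [Real.norm_eq_abs, abs_mul, Real.abs_exp]
    _ ≤ Real.exp (x s - ρ * s + ρ * σ) * E :=
        mul_le_mul (Real.exp_le_exp.2 this) hWσ (abs_nonneg _) (Real.exp_pos _).le
    _ = E * Real.exp (x s - ρ * s) * Real.exp (ρ * σ) := by rw [Real.exp_add]; ring

theorem ae_norm_exp_neg_mul_le_Ioi (s : ℝ) :
    ∀ᵐ σ ∂volume.restrict (Ioi s),
      ‖Real.exp (-x σ) * W σ‖ ≤ E * Real.exp (-x s + ρ * s) * Real.exp (-ρ * σ) := by
  filter_upwards [ae_restrict_mem measurableSet_Ioi, ae_restrict_of_ae hWE] with σ hσ hWσ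
  have : -x σ ≤ -x s + ρ * s + -ρ * σ := by linarith [hx s σ (le_of_lt hσ)]
  calc ‖Real.exp (-x σ) * W σ‖ = Real.exp (-x σ) * |W σ| := by
        rw [Real.norm_eq_abs, abs_mul, Real.abs_exp]
    _ ≤ Real.exp (-x s + ρ * s + -ρ * σ) * E :=
        mul_le_mul (Real.exp_le_exp.2 this) hWσ (abs_nonneg _) (Real.exp_pos _).le
    _ = E * Real.exp (-x s + ρ * s) * Real.exp (-ρ * σ) := by rw [Real.exp_add]; ring

include hρ

theorem abs_leftIntegral_le (s : ℝ) : |leftIntegral x W s| ≤ E * Real.exp (x s) / ρ :=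
  calc |leftIntegral x W s|
      ≤ ∫ σ in Iic s, E * Real.exp (x s - ρ * s) * Real.exp (ρ * σ) :=
        norm_integral_le_of_norm_le ((integrableOn_exp_mul_Iic hρ s).const_mul _)
          (ae_norm_exp_mul_le_Iic hx hWE s)
    _ = E * Real.exp (x s) / ρ := by
        rw [integral_const_mul, integral_exp_mul_Iic hρ, mul_div_assoc', mul_assoc,
          ← Real.exp_add, sub_add_cancel]

theorem abs_rightIntegral_le (s : ℝ) : |rightIntegral x W s| ≤ E * Real.exp (-x s) / ρ :=
  calc |rightIntegral x W s|
      ≤ ∫ σ in Ioi s, E * Real.exp (-x s + ρ * s) * Real.exp (-ρ * σ) :=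
        norm_integral_le_of_norm_le
          ((integrableOn_exp_mul_Ioi (neg_neg_of_pos hρ) s).const_mul _)
          (ae_norm_exp_neg_mul_le_Ioi hx hWE s)
    _ = E * Real.exp (-x s) / ρ := by
        rw [integral_const_mul, integral_exp_mul_Ioi (neg_neg_of_pos hρ), neg_div_neg_eq,
          mul_div_assoc', mul_assoc, ← Real.exp_add, neg_mul, add_neg_cancel_right]

theorem abs_exp_neg_mul_leftIntegral_le (s : ℝ) :
    |Real.exp (-x s) * leftIntegral x W s| ≤ E / ρ := by
  have h := abs_leftIntegral_le hρ hx hWE s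
  rw [abs_mul, Real.abs_exp]
  calc Real.exp (-x s) * |leftIntegral x W s|
      ≤ Real.exp (-x s) * (E * Real.exp (x s) / ρ) := by gcongr
    _ = E / ρ := by rw [Real.exp_neg]; field_simp

theorem abs_exp_mul_rightIntegral_le (s : ℝ) :
    |Real.exp (x s) * rightIntegral x W s| ≤ E / ρ := by
  have h := abs_rightIntegral_le hρ hx hWE s
  rw [abs_mul, Real.abs_exp]
  calc Real.exp (x s) * |rightIntegral x W s|
      ≤ Real.exp (x s) * (E * Real.exp (-x s) / ρ) := by gcongr
    _ = E / ρ := by rw [Real.exp_neg]; field_simp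

include hW

theorem integrableOn_Iic_exp_mul (s : ℝ) :
    IntegrableOn (fun σ => Real.exp (x σ) * W σ) (Iic s) :=
  Integrable.mono' ((integrableOn_exp_mul_Iic hρ s).const_mul _)
    (((monotone_of_mul_sub_le hρ.le hx).measurable.exp.aestronglyMeasurable.mul hW).restrict)
    (ae_norm_exp_mul_le_Iic hx hWE s)

theorem integrableOn_Ioi_exp_neg_mul (s : ℝ) :
    IntegrableOn (fun σ => Real.exp (-x σ) * W σ) (Ioi s) :=
  Integrable.mono' ((integrableOn_exp_mul_Ioi (neg_neg_of_pos hρ) s).const_mul _)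
    (((monotone_of_mul_sub_le hρ.le hx).measurable.neg.exp.aestronglyMeasurable.mul hW).restrict)
    (ae_norm_exp_neg_mul_le_Ioi hx hWE s)

theorem leftIntegral_sub_leftIntegral (a b : ℝ) :
    leftIntegral x W b - leftIntegral x W a = ∫ σ in a..b, Real.exp (x σ) * W σ :=
  intervalIntegral.integral_Iic_sub_Iic (integrableOn_Iic_exp_mul hρ hx hW hWE a)
    (integrableOn_Iic_exp_mul hρ hx hW hWE b)

theorem rightIntegral_sub_rightIntegral (a b : ℝ) :
    rightIntegral x W b - rightIntegral x W a = ∫ σ in a..b, -(Real.exp (-x σ) * W σ) := by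
  rw [intervalIntegral.integral_neg, ← intervalIntegral.integral_Ioi_sub_Ioi'
    (integrableOn_Ioi_exp_neg_mul hρ hx hW hWE a) (integrableOn_Ioi_exp_neg_mul hρ hx hW hWE b),
    neg_sub]
  rfl

theorem integral_green_mul_eq (s : ℝ) :
    ∫ σ, green (x s - x σ) * W σ
      = (Real.exp (-x s) * leftIntegral x W s + Real.exp (x s) * rightIntegral x W s) / 2 := by
  have hmono := monotone_of_mul_sub_le hρ.le hx
  rw [integral_eq_mul_integral_Iic_add_mul_integral_Ioi (c₁ := Real.exp (-x s) / 2)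
    (c₂ := Real.exp (x s) / 2) (integrableOn_Iic_exp_mul hρ hx hW hWE s)
    (integrableOn_Ioi_exp_neg_mul hρ hx hW hWE s), leftIntegral, rightIntegral]
  · ring
  · filter_upwards [ae_restrict_mem measurableSet_Iic] with σ hσ
    rw [green, exp_neg_abs_sub_of_le (hmono hσ)]; ring
  · filter_upwards [ae_restrict_mem measurableSet_Ioi] with σ hσ
    rw [green, exp_neg_abs_sub_of_ge (hmono (le_of_lt hσ))]; ring

theorem neg_integral_greenDeriv_mul_eq (s : ℝ) :
    -∫ σ, greenDeriv (x s - x σ) * W σ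
      = (Real.exp (-x s) * leftIntegral x W s - Real.exp (x s) * rightIntegral x W s) / 2 := by
  have hlt : ∀ a b, a < b → x a < x b := fun a b hab => by
    nlinarith [hx a b hab.le, mul_pos hρ (sub_pos.2 hab)]
  have hne : ∀ᵐ σ ∂volume.restrict (Iic s), σ ≠ s :=
    ae_restrict_of_ae (by simp [ae_iff, measure_singleton])
  rw [integral_eq_mul_integral_Iic_add_mul_integral_Ioi (c₁ := -(Real.exp (-x s) / 2))
    (c₂ := Real.exp (x s) / 2) (integrableOn_Iic_exp_mul hρ hx hW hWE s)
    (integrableOn_Ioi_exp_neg_mul hρ hx hW hWE s), leftIntegral, rightIntegral]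
  · ring
  · filter_upwards [ae_restrict_mem measurableSet_Iic, hne] with σ hσ hσs
    have hxσ := hlt σ s (lt_of_le_of_ne hσ hσs)
    rw [greenDeriv, Real.sign_of_pos (sub_pos.2 hxσ), exp_neg_abs_sub_of_le hxσ.le]; ring
  · filter_upwards [ae_restrict_mem measurableSet_Ioi] with σ hσ
    have hxσ := hlt s σ hσ
    rw [greenDeriv, Real.sign_of_neg (sub_neg.2 hxσ), exp_neg_abs_sub_of_ge hxσ.le]; ring

theorem abs_integral_green_mul_le (s : ℝ) : |∫ σ, green (x s - x σ) * W σ| ≤ E / ρ := by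
  rw [integral_green_mul_eq hρ hx hW hWE, abs_div, abs_two]
  linarith [abs_add_le (Real.exp (-x s) * leftIntegral x W s)
      (Real.exp (x s) * rightIntegral x W s),
    abs_exp_neg_mul_leftIntegral_le hρ hx hWE s, abs_exp_mul_rightIntegral_le hρ hx hWE s]

theorem abs_neg_integral_greenDeriv_mul_le (s : ℝ) :
    |-∫ σ, greenDeriv (x s - x σ) * W σ| ≤ E / ρ := by
  rw [neg_integral_greenDeriv_mul_eq hρ hx hW hWE, abs_div, abs_two]
  linarith [abs_sub (Real.exp (-x s) * leftIntegral x W s) (Real.exp (x s) * rightIntegral x W s),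
    abs_exp_neg_mul_leftIntegral_le hρ hx hWE s, abs_exp_mul_rightIntegral_le hρ hx hWE s]

theorem ae_hasDerivAt_neg_integral_greenDeriv_mul {x' : ℝ → ℝ}
    (hx' : ∀ᵐ s, HasDerivAt x (x' s) s) :
    ∀ᵐ s, HasDerivAt (fun s => -∫ σ, greenDeriv (x s - x σ) * W σ)
      (W s - x' s * ∫ σ, green (x s - x σ) * W σ) s := by
  have hL := ae_hasDerivAt_of_sub_eq_integral
    (locallyIntegrable_of_forall_integrableOn_Iic (integrableOn_Iic_exp_mul hρ hx hW hWE))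
    (leftIntegral_sub_leftIntegral hρ hx hW hWE)
  have hR := ae_hasDerivAt_of_sub_eq_integral
    (locallyIntegrable_of_forall_integrableOn_Ioi (integrableOn_Ioi_exp_neg_mul hρ hx hW hWE)).neg
    (rightIntegral_sub_rightIntegral hρ hx hW hWE)
  filter_upwards [hx', hL, hR] with s hxs hLs hRs
  rw [funext (neg_integral_greenDeriv_mul_eq hρ hx hW hWE), integral_green_mul_eq hρ hx hW hWE]
  exact ((hxs.exp_neg_mul_sub_exp_mul hLs hRs).div_const 2).congr_deriv (by ring)

theorem absolutelyContinuousOnInterval_neg_integral_greenDeriv_mul {K : NNReal}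
    (hxK : LipschitzWith K x) (a b : ℝ) :
    AbsolutelyContinuousOnInterval (fun s => -∫ σ, greenDeriv (x s - x σ) * W σ) a b := by
  have hL := absolutelyContinuousOnInterval_of_sub_eq_integral
    (locallyIntegrable_of_forall_integrableOn_Iic (integrableOn_Iic_exp_mul hρ hx hW hWE))
    (leftIntegral_sub_leftIntegral hρ hx hW hWE) a b
  have hR := absolutelyContinuousOnInterval_of_sub_eq_integral
    (locallyIntegrable_of_forall_integrableOn_Ioi (integrableOn_Ioi_exp_neg_mul hρ hx hW hWE)).neg
    (rightIntegral_sub_rightIntegral hρ hx hW hWE) a b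
  have hexp := Real.contDiff_exp.locallyLipschitz (𝕂 := ℝ)
  have hexpx : AbsolutelyContinuousOnInterval (fun s => Real.exp (x s)) a b :=
    (hexp.comp hxK.locallyLipschitz).absolutelyContinuousOnInterval a b
  have hexpnx : AbsolutelyContinuousOnInterval (fun s => Real.exp (-x s)) a b :=
    (hexp.comp hxK.neg.locallyLipschitz).absolutelyContinuousOnInterval a b
  have hrepr : (fun s => -∫ σ, greenDeriv (x s - x σ) * W σ) = fun s =>
      2⁻¹ * (Real.exp (-x s) * leftIntegral x W s - Real.exp (x s) * rightIntegral x W s) :=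
    funext fun s => by rw [neg_integral_greenDeriv_mul_eq hρ hx hW hWE, inv_mul_eq_div]
  rw [hrepr]
  exact ((hexpnx.fun_mul hL).fun_sub (hexpx.fun_mul hR)).const_mul _

theorem lipschitzWith_neg_integral_greenDeriv_mul {K : NNReal} {x' : ℝ → ℝ}
    (hxK : LipschitzWith K x) (hx' : ∀ᵐ s, HasDerivAt x (x' s) s) :
    LipschitzWith (Real.toNNReal (E * (1 + K / ρ)))
      (fun s => -∫ σ, greenDeriv (x s - x σ) * W σ) := by
  refine LipschitzWith.of_dist_le' fun a b => ?_
  rw [Real.dist_eq, Real.dist_eq]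
  refine (absolutelyContinuousOnInterval_neg_integral_greenDeriv_mul hρ hx hW hWE hxK b a
    ).abs_sub_le_of_ae_abs_deriv_le ?_
  filter_upwards [ae_hasDerivAt_neg_integral_greenDeriv_mul hρ hx hW hWE hx',
    hxK.ae_abs_le hx', hWE] with s hF hx's hWs
  have hP := abs_integral_green_mul_le hρ hx hW hWE s
  rw [hF.deriv]
  calc |W s - x' s * ∫ σ, green (x s - x σ) * W σ|
      ≤ |W s| + |x' s| * |∫ σ, green (x s - x σ) * W σ| := by
        rw [← abs_mul]; exact abs_sub _ _
    _ ≤ E + K * (E / ρ) := add_le_add hWs (mul_le_mul hx's hP (abs_nonneg _) K.2)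
    _ = E * (1 + K / ρ) := by ring

end

end GreenKernel

theorem stmt_13_general (ρ : ℝ) (hρ : 0 < ρ) (ξ ξ' : ℝ → ℝ) (L : ℝ)
    (hlip : ∀ a b : ℝ, |ξ a - ξ b| ≤ L * |a - b|)
    (hderiv : ∀ᵐ σ ∂volume, HasDerivAt ξ (ξ' σ) σ)
    (hlow : ∀ᵐ σ ∂volume, ρ ≤ 1 + ξ' σ)
    (x : ℝ → ℝ) (hx : ∀ s, x s = s + ξ s)
    (M : ℝ → ℝ) (hMm : Measurable M)
    (hMb : BddAbove (Set.range fun σ => |M σ|))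
    (F₁ : ℝ → ℝ)
    (hF₁ : ∀ s, F₁ s =
      -∫ σ, (-(1 / 2) * Real.sign (x s - x σ) * Real.exp (-|x s - x σ|)) *
        M σ * (1 + ξ' σ)) :
    (∃ K : ℝ, 0 ≤ K ∧ ∀ a b : ℝ, |F₁ a - F₁ b| ≤ K * |a - b|) ∧
    (∃ C : ℝ, ∀ s : ℝ, |F₁ s| ≤ C) ∧
    (∀ᵐ s ∂volume, HasDerivAt F₁
      ((M s - ∫ σ, (1 / 2) * Real.exp (-|x s - x σ|) * M σ * (1 + ξ' σ)) *
        (1 + ξ' s)) s) := by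
  obtain rfl : x = fun s => s + ξ s := funext hx
  have hxK : LipschitzWith (1 + L.toNNReal) fun s => s + ξ s :=
    LipschitzWith.id.add (LipschitzWith.of_dist_le' fun a b => by
      simpa only [Real.dist_eq] using hlip a b)
  have hx' : ∀ᵐ s, HasDerivAt (fun s => s + ξ s) (1 + ξ' s) s :=
    hderiv.mono fun s hs => (hasDerivAt_id s).add hs
  have hexpand : ∀ a b, a ≤ b → ρ * (b - a) ≤ (b + ξ b) - (a + ξ a) :=
    fun _ _ => hxK.locallyLipschitz.mul_sub_le_sub_of_ae_le hx' hlow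
  obtain ⟨C, hC⟩ := hMb
  set W : ℝ → ℝ := fun σ => M σ * (1 + ξ' σ) with hW_def
  have hWE : ∀ᵐ σ, |W σ| ≤ C * (1 + L.toNNReal) := by
    filter_upwards [hxK.ae_abs_le hx'] with σ hσ
    rw [abs_mul]
    exact mul_le_mul (hC ⟨σ, rfl⟩) hσ (abs_nonneg _) ((abs_nonneg _).trans (hC ⟨0, rfl⟩))
  have hW : AEStronglyMeasurable W volume :=
    (hMm.aemeasurable.mul (aemeasurable_of_ae_hasDerivAt hx')).aestronglyMeasurable
  have hF : F₁ = fun s => -∫ σ, greenDeriv ((s + ξ s) - (σ + ξ σ)) * W σ :=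
    funext fun s => by rw [hF₁]; simp only [greenDeriv, hW_def, mul_assoc]
  have hG : ∀ s, ∫ σ, green ((s + ξ s) - (σ + ξ σ)) * W σ
      = ∫ σ, (1 / 2) * Real.exp (-|(s + ξ s) - (σ + ξ σ)|) * M σ * (1 + ξ' σ) := fun s => by
    simp only [green, hW_def, mul_assoc]
  subst hF
  refine ⟨⟨_, NNReal.coe_nonneg _, fun a b => by
      simpa only [Real.dist_eq] using
        (lipschitzWith_neg_integral_greenDeriv_mul hρ hexpand hW hWE hxK hx').dist_le_mul a b⟩,
    ⟨_, abs_neg_integral_greenDeriv_mul_le hρ hexpand hW hWE⟩, ?_⟩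
  filter_upwards [ae_hasDerivAt_neg_integral_greenDeriv_mul hρ hexpand hW hWE hx'] with s hs
  exact hs.congr_deriv (by rw [hG]; ring)

/-- The map `F₁(s) = −∫ G'(x(s) − x(σ))·M(σ)·(1 + ξ'(σ)) dσ` is Lipschitz
and bounded, and for a.e. `s` it is differentiable with
`F₁'(s) = (M(s) − ∫ G(x(s) − x(σ))·M(σ)·(1 + ξ'(σ)) dσ)·(1 + ξ'(s))`. -/
theorem stmt_13 (ρ : ℝ) (hρ : 0 < ρ) (ξ ξ' : ℝ → ℝ) (L : ℝ) (hL : 0 ≤ L)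
    (hlip : ∀ a b : ℝ, |ξ a - ξ b| ≤ L * |a - b|)
    (hderiv : ∀ᵐ σ ∂volume, HasDerivAt ξ (ξ' σ) σ)
    (hlow : ∀ᵐ σ ∂volume, ρ ≤ 1 + ξ' σ)
    (x : ℝ → ℝ) (hx : ∀ s, x s = s + ξ s)
    (M : ℝ → ℝ) (hMm : Measurable M)
    (hMb : BddAbove (Set.range fun σ => |M σ|))
    (hM2 : Integrable (fun σ => (M σ) ^ 2) volume)
    (F₁ : ℝ → ℝ)
    (hF₁ : ∀ s, F₁ s =
      -∫ σ, (-(1 / 2) * Real.sign (x s - x σ) * Real.exp (-|x s - x σ|)) *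
        M σ * (1 + ξ' σ)) :
    (∃ K : ℝ, 0 ≤ K ∧ ∀ a b : ℝ, |F₁ a - F₁ b| ≤ K * |a - b|) ∧
    (∃ C : ℝ, ∀ s : ℝ, |F₁ s| ≤ C) ∧
    (∀ᵐ s ∂volume, HasDerivAt F₁
      ((M s - ∫ σ, (1 / 2) * Real.exp (-|x s - x σ|) * M σ * (1 + ξ' σ)) *
        (1 + ξ' s)) s) :=
  stmt_13_general ρ hρ ξ ξ' L hlip hderiv hlow x hx M hMm hMb F₁ hF₁
end

section
/- Let θ ∈ (0, 1) and let m be a positive integer. Define φ_m : ℝ → ℝ by φ_m(x) = 1 for x ≤ 0, φ_m(x) = exp(θx) for 0 < x ≤ m, and φ_m(x) = exp(θm) for x ≥ m. Then for every x ∈ ℝ, φ_m(x)·∫_{−∞}^{∞} exp(−|x − y|)·(1/φ_m(y)) dy ≤ 4/(1 − θ). -/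
/-!
The weight is `φ = exp (θ * clamp)` with `clamp y = min (max y 0) m` a 1-Lipschitz function, so
`φ x / φ y ≤ exp (θ * |x - y|)`. The integrand `φ x * exp (-|x - y|) / φ y` is therefore dominated by
`exp (-(1 - θ) * |x - y|)`, whose integral is `2 / (1 - θ)`.
-/

open MeasureTheory Set

theorem integral_exp_neg_mul_abs {c : ℝ} (hc : 0 < c) :
    ∫ t, Real.exp (-(c * |t|)) = 2 / c := by
  rw [integral_comp_abs (f := fun t => Real.exp (-(c * t)))]
  simp_rw [← neg_mul]
  rw [integral_exp_mul_Ioi (neg_lt_zero.mpr hc), mul_zero, Real.exp_zero]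
  field_simp

theorem integrable_exp_neg_mul_abs {c : ℝ} (hc : 0 < c) :
    Integrable fun t => Real.exp (-(c * |t|)) :=
  .of_integral_ne_zero (by rw [integral_exp_neg_mul_abs hc]; positivity)

theorem exp_mul_integral_exp_neg_abs_sub_mul_inv_le {h : ℝ → ℝ} (hh : LipschitzWith 1 h)
    {θ : ℝ} (hθ₀ : 0 ≤ θ) (hθ₁ : θ < 1) (x : ℝ) :
    Real.exp (θ * h x) * ∫ y, Real.exp (-|x - y|) * (Real.exp (θ * h y))⁻¹ ≤ 2 / (1 - θ) := by
  have hc : 0 < 1 - θ := sub_pos.mpr hθ₁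
  have hdom (y : ℝ) : Real.exp (θ * h x) * (Real.exp (-|x - y|) * (Real.exp (θ * h y))⁻¹)
      ≤ Real.exp (-((1 - θ) * |x - y|)) := by
    have hxy : h x ≤ h y + |x - y| := by simpa [Real.dist_eq] using hh.le_add_mul x y
    rw [← Real.exp_neg, ← Real.exp_add, ← Real.exp_add, Real.exp_le_exp]
    nlinarith
  calc _ = ∫ y, Real.exp (θ * h x) * (Real.exp (-|x - y|) * (Real.exp (θ * h y))⁻¹) :=
        (integral_const_mul _ _).symm
    _ ≤ ∫ y, Real.exp (-((1 - θ) * |x - y|)) :=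
        integral_mono_of_nonneg (.of_forall fun y => by positivity)
          ((integrable_exp_neg_mul_abs hc).comp_sub_left x) (.of_forall hdom)
    _ = 2 / (1 - θ) := by
        rw [integral_sub_left_eq_self (fun t => Real.exp (-((1 - θ) * |t|))),
          integral_exp_neg_mul_abs hc]

theorem eq_exp_mul_min_max_of_piecewise {θ a : ℝ} (ha : 0 ≤ a) {φ : ℝ → ℝ}
    (hφ₁ : ∀ x : ℝ, x ≤ 0 → φ x = 1)
    (hφ₂ : ∀ x : ℝ, 0 < x → x ≤ a → φ x = Real.exp (θ * x))
    (hφ₃ : ∀ x : ℝ, a ≤ x → φ x = Real.exp (θ * a)) (y : ℝ) :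
    φ y = Real.exp (θ * min (max y 0) a) := by
  rcases le_or_gt y 0 with hy₀ | hy₀
  · rw [hφ₁ y hy₀, max_eq_right hy₀, min_eq_left ha, mul_zero, Real.exp_zero]
  rcases le_or_gt y a with hya | hya
  · rw [hφ₂ y hy₀ hya, max_eq_left hy₀.le, min_eq_left hya]
  · rw [hφ₃ y hya.le, max_eq_left hy₀.le, min_eq_right hya.le]

theorem stmt_14_general (θ : ℝ) (hθ₀ : 0 < θ) (hθ₁ : θ < 1) (m : ℕ)
    (φ : ℝ → ℝ)
    (hφ₁ : ∀ x : ℝ, x ≤ 0 → φ x = 1)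
    (hφ₂ : ∀ x : ℝ, 0 < x → x ≤ (m : ℝ) → φ x = Real.exp (θ * x))
    (hφ₃ : ∀ x : ℝ, (m : ℝ) ≤ x → φ x = Real.exp (θ * m)) :
    ∀ x : ℝ, φ x * (∫ y, Real.exp (-|x - y|) * (φ y)⁻¹) ≤ 4 / (1 - θ) := by
  intro x
  have hφ : φ = fun y => Real.exp (θ * min (max y 0) (m : ℝ)) :=
    funext (eq_exp_mul_min_max_of_piecewise m.cast_nonneg hφ₁ hφ₂ hφ₃)
  have hclamp : LipschitzWith 1 fun y : ℝ => min (max y 0) (m : ℝ) :=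
    (LipschitzWith.id.max_const 0).min_const m
  calc _ ≤ 2 / (1 - θ) := by
        rw [hφ]
        exact exp_mul_integral_exp_neg_abs_sub_mul_inv_le hclamp hθ₀.le hθ₁ x
    _ ≤ 4 / (1 - θ) := by gcongr; linarith

/-- For the truncated exponential weight `φ_m` (with `θ ∈ (0,1)` and
`m ∈ ℤ⁺`), one has `φ_m(x)·∫ exp(−|x − y|)·φ_m(y)⁻¹ dy ≤ 4/(1 − θ)` for every `x`. -/
theorem stmt_14 (θ : ℝ) (hθ₀ : 0 < θ) (hθ₁ : θ < 1) (m : ℕ) (hm : 0 < m)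
    (φ : ℝ → ℝ)
    (hφ₁ : ∀ x : ℝ, x ≤ 0 → φ x = 1)
    (hφ₂ : ∀ x : ℝ, 0 < x → x ≤ (m : ℝ) → φ x = Real.exp (θ * x))
    (hφ₃ : ∀ x : ℝ, (m : ℝ) ≤ x → φ x = Real.exp (θ * m)) :
    ∀ x : ℝ, φ x * (∫ y, Real.exp (-|x - y|) * (φ y)⁻¹) ≤ 4 / (1 - θ) :=
  stmt_14_general θ hθ₀ hθ₁ m φ hφ₁ hφ₂ hφ₃
end

section
/- Let θ ∈ (0, 1), let m be a positive integer, and define φ_m : ℝ → ℝ by φ_m(x) = 1 for x ≤ 0, φ_m(x) = exp(θx) for 0 < x ≤ m, and φ_m(x) = exp(θm) for x ≥ m. Let f : ℝ → ℝ be measurable with both sup |f| and sup |φ_m·f| finite. Then for every x ∈ ℝ: (i) φ_m(x)·| (1/2)∫ sgn(x − y)·exp(−|x − y|)·f(y)² dy | ≤ (4/(1 − θ))·(sup |φ_m f|)·(sup |f|); and (ii) φ_m(x)·| (1/2)∫ exp(−|x − y|)·f(y)² dy − f(x)² | ≤ (4/(1 − θ))·(sup |φ_m f|)·(sup |f|).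 -/
/-!
Write `φ = exp (θ · π)` with `π` the projection onto `[0, m]`. Since `π` is a contraction,
`φ x ≤ exp (θ |x - y|) φ y`, so against the kernel `exp (-|x - y|)` the weight can be moved
from `x` onto `f y` at the cost of replacing the kernel by `exp (-(1 - θ) |x - y|)`, whose
integral is `2 / (1 - θ)`. This bounds `φ · (G ∗ f²)` by `(1 / (1 - θ)) ‖φ f‖_∞ ‖f‖_∞`; the
signed kernel `∂ₓG` is dominated by `G`, and the extra term `φ f²` in (ii) is at most
`‖φ f‖_∞ ‖f‖_∞`.
-/

open MeasureTheory Real Set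

theorem integral_exp_neg_mul_abs_s15 {a : ℝ} (ha : 0 < a) : ∫ y, exp (-(a * |y|)) = 2 / a := by
  rw [integral_comp_abs (f := fun t => exp (-(a * t))),
    integral_comp_mul_left_Ioi (fun t => exp (-t)) 0 ha, mul_zero, integral_exp_neg_Ioi_zero,
    smul_eq_mul, mul_one, div_eq_mul_inv]

theorem integrable_exp_neg_mul_abs_s15 {a : ℝ} (ha : 0 < a) :
    Integrable fun y : ℝ => exp (-(a * |y|)) :=
  .of_integral_ne_zero (by rw [integral_exp_neg_mul_abs_s15 ha]; positivity)

theorem integral_exp_neg_mul_abs_sub {a : ℝ} (ha : 0 < a) (x : ℝ) :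
    ∫ y, exp (-(a * |x - y|)) = 2 / a := by
  simp_rw [abs_sub_comm x]
  rw [integral_sub_right_eq_self (fun y => exp (-(a * |y|))) x, integral_exp_neg_mul_abs_s15 ha]

theorem integrable_exp_neg_mul_abs_sub {a : ℝ} (ha : 0 < a) (x : ℝ) :
    Integrable fun y : ℝ => exp (-(a * |x - y|)) := by
  simpa [abs_sub_comm] using (integrable_exp_neg_mul_abs_s15 ha).comp_sub_right x

theorem integrable_exp_neg_abs_sub (x : ℝ) : Integrable fun y : ℝ => exp (-|x - y|) := by
  simpa using integrable_exp_neg_mul_abs_sub one_pos x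

theorem integrable_exp_neg_abs_sub_mul_sq {f : ℝ → ℝ} (hf : AEStronglyMeasurable f)
    (hfb : BddAbove (range fun y => |f y|)) (x : ℝ) :
    Integrable fun y => exp (-|x - y|) * f y ^ 2 := by
  obtain ⟨M, hM⟩ := hfb
  refine (integrable_exp_neg_abs_sub x).mul_bdd (c := M ^ 2) (hf.pow 2)
    (ae_of_all _ fun y => ?_)
  rw [norm_pow, norm_eq_abs]
  exact pow_le_pow_left₀ (abs_nonneg _) (hM ⟨y, rfl⟩) 2

theorem abs_integral_sign_mul_le {k : ℝ → ℝ} (s : ℝ → ℝ) (hk : Integrable k)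
    (hk₀ : ∀ y, 0 ≤ k y) : |∫ y, sign (s y) * k y| ≤ ∫ y, k y := by
  refine norm_integral_le_of_norm_le (f := fun y => sign (s y) * k y) hk
    (ae_of_all _ fun y => ?_)
  have hsign : |sign (s y)| ≤ 1 := by
    rcases sign_apply_eq (s y) with h | h | h <;> simp [h]
  rw [norm_eq_abs, abs_mul, abs_of_nonneg (hk₀ y)]
  exact mul_le_of_le_one_left (hk₀ y) hsign

theorem mul_integral_exp_neg_abs_sub_mul_le {w g : ℝ → ℝ} {θ C x : ℝ} (hθ : θ < 1)
    (hw : ∀ y, w x ≤ exp (θ * |x - y|) * w y) (hg₀ : ∀ y, 0 ≤ g y)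
    (hwg : ∀ y, w y * g y ≤ C) (hg : Integrable fun y => exp (-|x - y|) * g y) :
    w x * ∫ y, exp (-|x - y|) * g y ≤ 2 / (1 - θ) * C := by
  have hdecay : 0 < 1 - θ := sub_pos.2 hθ
  rw [← integral_const_mul, ← integral_exp_neg_mul_abs_sub hdecay x, ← integral_mul_const]
  refine integral_mono (hg.const_mul _) ((integrable_exp_neg_mul_abs_sub hdecay x).mul_const C)
    fun y => ?_
  have hexp : exp (θ * |x - y|) * exp (-|x - y|) = exp (-((1 - θ) * |x - y|)) := by
    rw [← exp_add]; ring_nf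
  calc w x * (exp (-|x - y|) * g y)
      ≤ exp (θ * |x - y|) * w y * (exp (-|x - y|) * g y) := by
        gcongr
        · exact mul_nonneg (exp_pos _).le (hg₀ y)
        · exact hw y
    _ = exp (-((1 - θ) * |x - y|)) * (w y * g y) := by rw [← hexp]; ring
    _ ≤ exp (-((1 - θ) * |x - y|)) * C := by gcongr; exact hwg y

theorem mul_sq_le_ciSup_mul_ciSup {ι : Type*} {w f : ι → ℝ}
    (hwf : BddAbove (range fun z => |w z * f z|)) (hf : BddAbove (range fun z => |f z|))
    {y : ι} (hy : 0 ≤ w y) : w y * f y ^ 2 ≤ (⨆ z, |w z * f z|) * ⨆ z, |f z| := by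
  rw [← abs_of_nonneg hy, ← sq_abs, sq, ← mul_assoc, ← abs_mul]
  exact mul_le_mul (le_ciSup hwf y) (le_ciSup hf y) (abs_nonneg _)
    ((abs_nonneg _).trans (le_ciSup hwf y))

section TruncatedWeight

variable {θ m : ℝ} {φ : ℝ → ℝ}

theorem eq_exp_mul_projIcc (hm : 0 ≤ m) (hφ₁ : ∀ x, x ≤ 0 → φ x = 1)
    (hφ₂ : ∀ x, 0 < x → x ≤ m → φ x = exp (θ * x)) (hφ₃ : ∀ x, m ≤ x → φ x = exp (θ * m))
    (x : ℝ) : φ x = exp (θ * projIcc 0 m hm x) := by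
  rcases le_or_gt x 0 with h₀ | h₀
  · rw [hφ₁ x h₀, projIcc_of_le_left hm h₀]; simp
  rcases le_or_gt x m with hm' | hm'
  · rw [hφ₂ x h₀ hm', projIcc_of_mem hm ⟨h₀.le, hm'⟩]
  · rw [hφ₃ x hm'.le, projIcc_of_right_le hm hm'.le]

theorem exp_mul_projIcc_le (hθ : 0 ≤ θ) (hm : 0 ≤ m) (x y : ℝ) :
    exp (θ * projIcc 0 m hm x) ≤ exp (θ * |x - y|) * exp (θ * projIcc 0 m hm y) := by
  rw [← exp_add, exp_le_exp, ← sub_le_iff_le_add, ← mul_sub]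
  exact mul_le_mul_of_nonneg_left ((le_abs_self _).trans (abs_projIcc_sub_projIcc hm)) hθ

end TruncatedWeight

theorem stmt_15_general (θ : ℝ) (hθ₀ : 0 < θ) (hθ₁ : θ < 1) (m : ℕ)
    (φ : ℝ → ℝ)
    (hφ₁ : ∀ x : ℝ, x ≤ 0 → φ x = 1)
    (hφ₂ : ∀ x : ℝ, 0 < x → x ≤ (m : ℝ) → φ x = Real.exp (θ * x))
    (hφ₃ : ∀ x : ℝ, (m : ℝ) ≤ x → φ x = Real.exp (θ * m))
    (f : ℝ → ℝ) (hfm : Measurable f)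
    (hfb : BddAbove (Set.range fun x => |f x|))
    (hφfb : BddAbove (Set.range fun x => |φ x * f x|)) :
    ∀ x : ℝ,
      (φ x * |(1 / 2) * ∫ y, Real.sign (x - y) * Real.exp (-|x - y|) * (f y) ^ 2| ≤
        (4 / (1 - θ)) * (⨆ z, |φ z * f z|) * ⨆ z, |f z|) ∧
      (φ x * |(1 / 2) * (∫ y, Real.exp (-|x - y|) * (f y) ^ 2) - (f x) ^ 2| ≤
        (4 / (1 - θ)) * (⨆ z, |φ z * f z|) * ⨆ z, |f z|) := by
  intro x
  set A := ⨆ z, |φ z * f z|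
  set B := ⨆ z, |f z|
  set I := ∫ y, exp (-|x - y|) * f y ^ 2
  have hφ := eq_exp_mul_projIcc (Nat.cast_nonneg m) hφ₁ hφ₂ hφ₃
  have hφ₀ : ∀ y, 0 ≤ φ y := fun y => hφ y ▸ (exp_pos _).le
  have hφf : ∀ y, φ y * f y ^ 2 ≤ A * B := fun y => mul_sq_le_ciSup_mul_ciSup hφfb hfb (hφ₀ y)
  have hAB : 0 ≤ A * B := (mul_nonneg (hφ₀ x) (sq_nonneg _)).trans (hφf x)
  have hint := integrable_exp_neg_abs_sub_mul_sq hfm.aestronglyMeasurable hfb x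
  have hI : 0 ≤ I := integral_nonneg fun y => by positivity
  have hφI : φ x * I ≤ 2 / (1 - θ) * (A * B) :=
    mul_integral_exp_neg_abs_sub_mul_le hθ₁
      (fun y => by simpa only [hφ] using exp_mul_projIcc_le hθ₀.le _ x y)
      (fun y => sq_nonneg _) hφf hint
  have hJ : |∫ y, sign (x - y) * exp (-|x - y|) * f y ^ 2| ≤ I := by
    simpa only [mul_assoc] using
      abs_integral_sign_mul_le (fun y => x - y) hint fun y => by positivity
  have hc : 1 ≤ 1 / (1 - θ) := by rw [le_div_iff₀ (by linarith)]; linarith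
  have hhalf : 1 / 2 * (φ x * I) ≤ 1 / (1 - θ) * (A * B) :=
    (mul_le_mul_of_nonneg_left hφI one_half_pos.le).trans_eq (by ring)
  rw [show 4 / (1 - θ) * A * B = 4 * (1 / (1 - θ)) * (A * B) by ring]
  constructor
  · calc φ x * |1 / 2 * ∫ y, sign (x - y) * exp (-|x - y|) * f y ^ 2|
        ≤ 1 / 2 * (φ x * I) := by
          rw [abs_mul, abs_of_pos one_half_pos, mul_left_comm]
          gcongr
          exact hφ₀ x
      _ ≤ 4 * (1 / (1 - θ)) * (A * B) := by nlinarith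
  · have hsub : |1 / 2 * I - f x ^ 2| ≤ 1 / 2 * I + f x ^ 2 :=
      abs_sub_le_iff.2 ⟨by linarith [sq_nonneg (f x)], by linarith⟩
    calc φ x * |1 / 2 * I - f x ^ 2| ≤ φ x * (1 / 2 * I + f x ^ 2) := by
          gcongr
          exact hφ₀ x
      _ = 1 / 2 * (φ x * I) + φ x * f x ^ 2 := by ring
      _ ≤ 4 * (1 / (1 - θ)) * (A * B) := by nlinarith [hφf x]

/-- Weighted estimates `φ_m·|∂_xG ∗ f²| ≤ (4/(1−θ))·‖φ_m f‖_∞·‖f‖_∞`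
and `φ_m·|G ∗ f² − f²| ≤ (4/(1−θ))·‖φ_m f‖_∞·‖f‖_∞` for the truncated exponential
weight `φ_m`, where `G(y) = (1/2)·exp(−|y|)`. -/
theorem stmt_15 (θ : ℝ) (hθ₀ : 0 < θ) (hθ₁ : θ < 1) (m : ℕ) (hm : 0 < m)
    (φ : ℝ → ℝ)
    (hφ₁ : ∀ x : ℝ, x ≤ 0 → φ x = 1)
    (hφ₂ : ∀ x : ℝ, 0 < x → x ≤ (m : ℝ) → φ x = Real.exp (θ * x))
    (hφ₃ : ∀ x : ℝ, (m : ℝ) ≤ x → φ x = Real.exp (θ * m))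
    (f : ℝ → ℝ) (hfm : Measurable f)
    (hfb : BddAbove (Set.range fun x => |f x|))
    (hφfb : BddAbove (Set.range fun x => |φ x * f x|)) :
    ∀ x : ℝ,
      (φ x * |(1 / 2) * ∫ y, Real.sign (x - y) * Real.exp (-|x - y|) * (f y) ^ 2| ≤
        (4 / (1 - θ)) * (⨆ z, |φ z * f z|) * ⨆ z, |f z|) ∧
      (φ x * |(1 / 2) * (∫ y, Real.exp (-|x - y|) * (f y) ^ 2) - (f x) ^ 2| ≤
        (4 / (1 - θ)) * (⨆ z, |φ z * f z|) * ⨆ z, |f z|) :=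
  stmt_15_general θ hθ₀ hθ₁ m φ hφ₁ hφ₂ hφ₃ f hfm hfb hφfb
end

section
/- Let f : ℝ → ℝ be Lebesgue integrable, let a < b be real numbers, let j be a nonnegative integer and θ ∈ (0, 1]. Suppose f restricted to the open interval (a, b) is j times continuously differentiable and its j-th derivative on (a, b) is θ-Hölder continuous (i.e. there is C ≥ 0 with |f^{(j)}(x₁) − f^{(j)}(x₂)| ≤ C·|x₁ − x₂|^θ for all x₁, x₂ ∈ (a, b)). Then the convolution v(x) = ∫ (1/2)·exp(−|x − y|)·f(y) dy is (j+1) times continuously differentiable on (a, b) and its (j+1)-th derivative is θ-Hölder continuous on (a, b). -/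
open MeasureTheory Set Bornology Topology Real

/-!
Splitting the integral at `x` gives `G ∗ f = (P + Q) / 2` with
`P x = ∫_{y ≤ x} e^{y-x} f y` and `Q x = ∫_{y > x} e^{x-y} f y`, and wherever `f` is continuous
`P' = f - P`, `Q' = Q - f`. Hence on `(a, b)` we have `v' = w := (Q - P) / 2` and `w' = v - f`,
i.e. `v'' = v - f`, so `v ∈ C^{j+2}(a, b)` with `v^{(k+2)} = v^{(k)} - f^{(k)}` for `k ≤ j`.
Now `v` and `w` are bounded by `‖f‖₁`, and every `f^{(k)}` with `k ≤ j` is bounded on the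
bounded interval (Hölder bound for `f^{(j)}`, then the mean value theorem downwards), so
`v^{(j+2)}` is bounded. Thus `v^{(j+1)}` is Lipschitz on `(a, b)`, hence `θ`-Hölder there.
-/

section BoundedOscillation

variable {s : Set ℝ} {g : ℝ → ℝ}

lemma exists_abs_le_of_abs_sub_le {K : ℝ} (h : ∀ x ∈ s, ∀ y ∈ s, |g x - g y| ≤ K) :
    ∃ M, ∀ x ∈ s, |g x| ≤ M := by
  rcases s.eq_empty_or_nonempty with rfl | ⟨x₀, hx₀⟩
  · exact ⟨0, by simp⟩
  refine ⟨|g x₀| + K, fun x hx => ?_⟩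
  have := abs_sub_abs_le_abs_sub (g x) (g x₀)
  linarith [h x hx x₀ hx₀]

lemma Convex.abs_sub_le_mul_of_abs_derivWithin_le (hs : Convex ℝ s)
    (hg : DifferentiableOn ℝ g s) {M : ℝ} (hM : ∀ x ∈ s, |derivWithin g s x| ≤ M) :
    ∀ x ∈ s, ∀ y ∈ s, |g x - g y| ≤ M * |x - y| :=
  fun _ hx _ hy => hs.norm_image_sub_le_of_norm_derivWithin_le hg hM hy hx

lemma Convex.exists_abs_le_of_abs_derivWithin_le (hs : Convex ℝ s) (hb : IsBounded s)
    (hg : DifferentiableOn ℝ g s) {M : ℝ} (hM : ∀ x ∈ s, |derivWithin g s x| ≤ M) :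
    ∃ M', ∀ x ∈ s, |g x| ≤ M' := by
  refine exists_abs_le_of_abs_sub_le (K := M * Metric.diam s) fun x hx y hy => ?_
  have hM₀ : 0 ≤ M := (abs_nonneg _).trans (hM x hx)
  calc |g x - g y| ≤ M * |x - y| := hs.abs_sub_le_mul_of_abs_derivWithin_le hg hM x hx y hy
    _ ≤ M * Metric.diam s := by
      gcongr; exact Real.dist_eq x y ▸ Metric.dist_le_diam_of_mem hb hx hy

lemma exists_abs_le_of_abs_sub_le_mul_rpow (hb : IsBounded s) {C θ : ℝ} (hC : 0 ≤ C)
    (hθ : 0 ≤ θ) (h : ∀ x ∈ s, ∀ y ∈ s, |g x - g y| ≤ C * |x - y| ^ θ) :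
    ∃ M, ∀ x ∈ s, |g x| ≤ M := by
  refine exists_abs_le_of_abs_sub_le (K := C * Metric.diam s ^ θ) fun x hx y hy => ?_
  calc |g x - g y| ≤ C * |x - y| ^ θ := h x hx y hy
    _ ≤ C * Metric.diam s ^ θ := by
      gcongr; exact Real.dist_eq x y ▸ Metric.dist_le_diam_of_mem hb hx hy

lemma abs_sub_le_mul_rpow_of_abs_sub_le_mul (hb : IsBounded s) {K θ : ℝ} (hK : 0 ≤ K)
    (hθ : θ ≤ 1) (h : ∀ x ∈ s, ∀ y ∈ s, |g x - g y| ≤ K * |x - y|) :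
    ∀ x ∈ s, ∀ y ∈ s, |g x - g y| ≤ K * Metric.diam s ^ (1 - θ) * |x - y| ^ θ := by
  intro x hx y hy
  have hdist : |x - y| ≤ Metric.diam s :=
    Real.dist_eq x y ▸ Metric.dist_le_diam_of_mem hb hx hy
  calc |g x - g y| ≤ K * |x - y| := h x hx y hy
    _ = K * (|x - y| ^ (1 - θ) * |x - y| ^ θ) := by
      rw [← Real.rpow_add' (abs_nonneg _) (by norm_num), sub_add_cancel, Real.rpow_one]
    _ ≤ K * (Metric.diam s ^ (1 - θ) * |x - y| ^ θ) := by gcongr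
    _ = K * Metric.diam s ^ (1 - θ) * |x - y| ^ θ := by ring

lemma Convex.exists_abs_iteratedDerivWithin_le_of_le (hs : Convex ℝ s) (hb : IsBounded s)
    (hu : UniqueDiffOn ℝ s) {n : ℕ} (hg : ContDiffOn ℝ n g s)
    (hn : ∃ M, ∀ x ∈ s, |iteratedDerivWithin n g s x| ≤ M) :
    ∀ k ≤ n, ∃ M, ∀ x ∈ s, |iteratedDerivWithin k g s x| ≤ M := by
  refine fun k hk => Nat.decreasingInduction (fun k hk ih => ?_) hn hk
  obtain ⟨M, hM⟩ := ih
  refine hs.exists_abs_le_of_abs_derivWithin_le hb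
    (hg.differentiableOn_iteratedDerivWithin (by exact_mod_cast hk) hu) (M := M) ?_
  simpa only [← iteratedDerivWithin_succ] using hM

end BoundedOscillation

lemma contDiffOn_succ_of_hasDerivAt {s : Set ℝ} {g g' : ℝ → ℝ} (hs : IsOpen s) {n : ℕ}
    (hg : ∀ x ∈ s, HasDerivAt g (g' x) x) (hg' : ContDiffOn ℝ n g' s) :
    ContDiffOn ℝ (n + 1) g s :=
  (contDiffOn_succ_iff_deriv_of_isOpen hs).2
    ⟨fun x hx => (hg x hx).differentiableAt.differentiableWithinAt, by simp,
      hg'.congr fun x hx => (hg x hx).deriv⟩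

section SecondOrderEquation

variable {s : Set ℝ} {f v w : ℝ → ℝ} (hs : IsOpen s)
  (hv : ∀ x ∈ s, HasDerivAt v (w x) x) (hw : ∀ x ∈ s, HasDerivAt w (v x - f x) x)
include hs hv hw

lemma contDiffOn_add_two_of_hasDerivAt_sub {n : ℕ} (hf : ContDiffOn ℝ n f s) :
    ContDiffOn ℝ (n + 2) v s := by
  have key : ∀ k ≤ n + 1, ContDiffOn ℝ k v s ∧ ContDiffOn ℝ k w s := by
    intro k hk
    induction k with
    | zero =>
      exact ⟨contDiffOn_zero.2 fun x hx => (hv x hx).continuousAt.continuousWithinAt,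
        contDiffOn_zero.2 fun x hx => (hw x hx).continuousAt.continuousWithinAt⟩
    | succ k ih =>
      obtain ⟨hvk, hwk⟩ := ih (by omega)
      have hfk : ContDiffOn ℝ k f s := hf.of_le (mod_cast show k ≤ n by omega)
      exact ⟨mod_cast contDiffOn_succ_of_hasDerivAt hs hv hwk,
        mod_cast contDiffOn_succ_of_hasDerivAt hs hw (hvk.sub hfk)⟩
  have := contDiffOn_succ_of_hasDerivAt hs hv (key (n + 1) le_rfl).2
  rwa [Nat.cast_succ, add_assoc, one_add_one_eq_two] at this

lemma iteratedDerivWithin_add_two_of_hasDerivAt_sub {n k : ℕ} (hf : ContDiffOn ℝ n f s)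
    (hk : k ≤ n) {x : ℝ} (hx : x ∈ s) :
    iteratedDerivWithin (k + 2) v s x =
      iteratedDerivWithin k v s x - iteratedDerivWithin k f s x := by
  have hv' : EqOn (derivWithin v s) w s := fun y hy =>
    (derivWithin_of_isOpen hs hy).trans (hv y hy).deriv
  have hw' : EqOn (derivWithin w s) (v - f) s := fun y hy =>
    (derivWithin_of_isOpen hs hy).trans (hw y hy).deriv
  rw [iteratedDerivWithin_succ', iteratedDerivWithin_congr hv' hx, iteratedDerivWithin_succ',
    iteratedDerivWithin_congr hw' hx,
    iteratedDerivWithin_sub hx hs.uniqueDiffOn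
      ((contDiffOn_add_two_of_hasDerivAt_sub hs hv hw hf).of_le
        (mod_cast show k ≤ n + 2 by omega) x hx)
      (hf.of_le (by exact_mod_cast hk) x hx)]

lemma exists_abs_iteratedDerivWithin_le_of_hasDerivAt_sub {n : ℕ} (hf : ContDiffOn ℝ n f s)
    (hfb : ∀ k ≤ n, ∃ M, ∀ x ∈ s, |iteratedDerivWithin k f s x| ≤ M)
    (hvb : ∃ M, ∀ x ∈ s, |v x| ≤ M) (hwb : ∃ M, ∀ x ∈ s, |w x| ≤ M) :
    ∀ k ≤ n + 2, ∃ M, ∀ x ∈ s, |iteratedDerivWithin k v s x| ≤ M := by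
  intro k
  induction k using Nat.twoStepInduction with
  | zero => simpa using hvb
  | one =>
    obtain ⟨M, hM⟩ := hwb
    refine fun _ => ⟨M, fun x hx => ?_⟩
    rw [iteratedDerivWithin_one, derivWithin_of_isOpen hs hx, (hv x hx).deriv]
    exact hM x hx
  | more k ih _ =>
    intro hk
    obtain ⟨M₁, hM₁⟩ := ih (by omega)
    obtain ⟨M₂, hM₂⟩ := hfb k (by omega)
    refine ⟨M₁ + M₂, fun x hx => ?_⟩
    rw [iteratedDerivWithin_add_two_of_hasDerivAt_sub hs hv hw hf (by omega) hx]
    exact (abs_sub _ _).trans (add_le_add (hM₁ x hx) (hM₂ x hx))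

end SecondOrderEquation

lemma hasDerivAt_setIntegral_Iic {g : ℝ → ℝ} (hg : ∀ u, IntegrableOn g (Iic u)) {x : ℝ}
    (hm : StronglyMeasurableAtFilter g (𝓝 x)) (hx : ContinuousAt g x) :
    HasDerivAt (fun u => ∫ y in Iic u, g y) (g x) x := by
  have h : (fun u => ∫ y in Iic u, g y) = fun u => (∫ y in Iic x, g y) + ∫ y in x..u, g y := by
    funext u
    rw [← intervalIntegral.integral_Iic_sub_Iic (hg x) (hg u), add_sub_cancel]
  rw [h]
  exact (intervalIntegral.integral_hasDerivAt_right .refl hm hx).const_add _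

lemma hasDerivAt_setIntegral_Ioi {g : ℝ → ℝ} (hg : ∀ u, IntegrableOn g (Ioi u)) {x : ℝ}
    (hm : StronglyMeasurableAtFilter g (𝓝 x)) (hx : ContinuousAt g x) :
    HasDerivAt (fun u => ∫ y in Ioi u, g y) (-g x) x := by
  have h : (fun u => ∫ y in Ioi u, g y) = fun u => (∫ y in Ioi x, g y) - ∫ y in x..u, g y := by
    funext u
    rw [← intervalIntegral.integral_Ioi_sub_Ioi' (hg x) (hg u), sub_sub_cancel]
  rw [h]
  exact (intervalIntegral.integral_hasDerivAt_right .refl hm hx).const_sub _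

namespace ExpKernel

variable {f : ℝ → ℝ}

noncomputable def leftPart (f : ℝ → ℝ) (x : ℝ) : ℝ := ∫ y in Iic x, exp (y - x) * f y

noncomputable def rightPart (f : ℝ → ℝ) (x : ℝ) : ℝ := ∫ y in Ioi x, exp (x - y) * f y

lemma integrableOn_Iic (hf : Integrable f) (c x : ℝ) :
    IntegrableOn (fun y => exp (y - c) * f y) (Iic x) :=
  hf.integrableOn.bdd_mul (c := exp (x - c)) (by fun_prop)
    (ae_restrict_of_forall_mem measurableSet_Iic fun y (hy : y ≤ x) => by
      rw [norm_of_nonneg (exp_pos _).le]; gcongr)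

lemma integrableOn_Ioi (hf : Integrable f) (c x : ℝ) :
    IntegrableOn (fun y => exp (c - y) * f y) (Ioi x) :=
  hf.integrableOn.bdd_mul (c := exp (c - x)) (by fun_prop)
    (ae_restrict_of_forall_mem measurableSet_Ioi fun y (hy : x < y) => by
      rw [norm_of_nonneg (exp_pos _).le]; gcongr)

lemma leftPart_eq_exp_mul (c x : ℝ) :
    leftPart f x = exp (c - x) * ∫ y in Iic x, exp (y - c) * f y := by
  rw [leftPart, ← integral_const_mul]
  congr 1 with y
  rw [← mul_assoc, ← exp_add, sub_add_sub_cancel']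

lemma rightPart_eq_exp_mul (c x : ℝ) :
    rightPart f x = exp (x - c) * ∫ y in Ioi x, exp (c - y) * f y := by
  rw [rightPart, ← integral_const_mul]
  congr 1 with y
  rw [← mul_assoc, ← exp_add, sub_add_sub_cancel]

lemma hasDerivAt_leftPart (hf : Integrable f) {x : ℝ} (hx : ContinuousAt f x) :
    HasDerivAt (leftPart f) (f x - leftPart f x) x := by
  have hF := hasDerivAt_setIntegral_Iic (integrableOn_Iic hf x)
    ((by fun_prop : Continuous fun y => exp (y - x)).aestronglyMeasurable.mul
      hf.1).stronglyMeasurableAtFilter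
    ((by fun_prop : Continuous fun y => exp (y - x)).continuousAt.mul hx)
  have hE : HasDerivAt (fun u => exp (x - u)) (-exp (x - x)) x := by
    simpa using ((hasDerivAt_id x).const_sub x).exp
  rw [show leftPart f = fun u => exp (x - u) * ∫ y in Iic u, exp (y - x) * f y from
    funext (leftPart_eq_exp_mul x)]
  refine (hE.mul hF).congr_deriv ?_
  simp only [sub_self, exp_zero, one_mul, neg_mul]
  ring

lemma hasDerivAt_rightPart (hf : Integrable f) {x : ℝ} (hx : ContinuousAt f x) :
    HasDerivAt (rightPart f) (rightPart f x - f x) x := by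
  have hF := hasDerivAt_setIntegral_Ioi (integrableOn_Ioi hf x)
    ((by fun_prop : Continuous fun y => exp (x - y)).aestronglyMeasurable.mul
      hf.1).stronglyMeasurableAtFilter
    ((by fun_prop : Continuous fun y => exp (x - y)).continuousAt.mul hx)
  have hE : HasDerivAt (fun u => exp (u - x)) (exp (x - x)) x := by
    simpa using ((hasDerivAt_id x).sub_const x).exp
  rw [show rightPart f = fun u => exp (u - x) * ∫ y in Ioi u, exp (x - y) * f y from
    funext (rightPart_eq_exp_mul x)]
  refine (hE.mul hF).congr_deriv ?_
  simp only [sub_self, exp_zero, one_mul]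
  ring

lemma abs_leftPart_le (hf : Integrable f) (x : ℝ) : |leftPart f x| ≤ ∫ y, |f y| :=
  calc |leftPart f x| = ‖leftPart f x‖ := (Real.norm_eq_abs _).symm
    _ ≤ ∫ y in Iic x, |f y| :=
        norm_integral_le_of_norm_le hf.abs.integrableOn
          (ae_restrict_of_forall_mem measurableSet_Iic fun y (hy : y ≤ x) => by
            rw [norm_mul, norm_of_nonneg (exp_pos _).le, Real.norm_eq_abs]
            exact mul_le_of_le_one_left (abs_nonneg _) (exp_le_one_iff.2 (by linarith)))
    _ ≤ ∫ y, |f y| := setIntegral_le_integral hf.abs (.of_forall fun _ => abs_nonneg _)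

lemma abs_rightPart_le (hf : Integrable f) (x : ℝ) : |rightPart f x| ≤ ∫ y, |f y| :=
  calc |rightPart f x| = ‖rightPart f x‖ := (Real.norm_eq_abs _).symm
    _ ≤ ∫ y in Ioi x, |f y| :=
        norm_integral_le_of_norm_le hf.abs.integrableOn
          (ae_restrict_of_forall_mem measurableSet_Ioi fun y (hy : x < y) => by
            rw [norm_mul, norm_of_nonneg (exp_pos _).le, Real.norm_eq_abs]
            exact mul_le_of_le_one_left (abs_nonneg _) (exp_le_one_iff.2 (by linarith)))
    _ ≤ ∫ y, |f y| := setIntegral_le_integral hf.abs (.of_forall fun _ => abs_nonneg _)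

lemma integral_eq_leftPart_add_rightPart (hf : Integrable f) (x : ℝ) :
    ∫ y, 1 / 2 * exp (-|x - y|) * f y = (leftPart f x + rightPart f x) / 2 := by
  have hint : Integrable fun y => 1 / 2 * exp (-|x - y|) * f y :=
    hf.bdd_mul (c := 1 / 2) (by fun_prop) (.of_forall fun y => by
      rw [norm_mul, norm_of_nonneg (exp_pos _).le, norm_of_nonneg (by norm_num)]
      exact mul_le_of_le_one_right (by norm_num) (exp_le_one_iff.2 (by simp)))
  rw [← intervalIntegral.integral_Iic_add_Ioi hint.integrableOn hint.integrableOn, leftPart,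
    rightPart, add_div, ← integral_div, ← integral_div]
  congr 1
  · refine setIntegral_congr_fun measurableSet_Iic fun y (hy : y ≤ x) => ?_
    rw [abs_of_nonneg (by linarith), neg_sub]
    ring
  · refine setIntegral_congr_fun measurableSet_Ioi fun y (hy : x < y) => ?_
    rw [abs_of_neg (by linarith), neg_neg]
    ring

lemma hasDerivAt_half_add (hf : Integrable f) {x : ℝ} (hx : ContinuousAt f x) :
    HasDerivAt (fun u => (leftPart f u + rightPart f u) / 2)
      ((rightPart f x - leftPart f x) / 2) x :=
  (((hasDerivAt_leftPart hf hx).add (hasDerivAt_rightPart hf hx)).div_const 2).congr_deriv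
    (by ring)

lemma hasDerivAt_half_sub (hf : Integrable f) {x : ℝ} (hx : ContinuousAt f x) :
    HasDerivAt (fun u => (rightPart f u - leftPart f u) / 2)
      ((leftPart f x + rightPart f x) / 2 - f x) x :=
  (((hasDerivAt_rightPart hf hx).sub (hasDerivAt_leftPart hf hx)).div_const 2).congr_deriv
    (by ring)

lemma abs_half_add_le (hf : Integrable f) (x : ℝ) :
    |(leftPart f x + rightPart f x) / 2| ≤ ∫ y, |f y| := by
  have := abs_add_le (leftPart f x) (rightPart f x)
  rw [abs_div, abs_two]
  linarith [abs_leftPart_le hf x, abs_rightPart_le hf x]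

lemma abs_half_sub_le (hf : Integrable f) (x : ℝ) :
    |(rightPart f x - leftPart f x) / 2| ≤ ∫ y, |f y| := by
  have := abs_sub (rightPart f x) (leftPart f x)
  rw [abs_div, abs_two]
  linarith [abs_leftPart_le hf x, abs_rightPart_le hf x]

end ExpKernel

theorem stmt_16_general (f : ℝ → ℝ) (hf : Integrable f volume)
    (a b : ℝ) (j : ℕ) (θ : ℝ) (hθ₀ : 0 < θ) (hθ₁ : θ ≤ 1)
    (hfreg : ContDiffOn ℝ j f (Set.Ioo a b))
    (C : ℝ) (hC : 0 ≤ C)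
    (hfhol : ∀ x₁ ∈ Set.Ioo a b, ∀ x₂ ∈ Set.Ioo a b,
      |iteratedDerivWithin j f (Set.Ioo a b) x₁ -
        iteratedDerivWithin j f (Set.Ioo a b) x₂| ≤ C * |x₁ - x₂| ^ θ)
    (v : ℝ → ℝ) (hv : ∀ x, v x = ∫ y, (1 / 2) * Real.exp (-|x - y|) * f y) :
    ContDiffOn ℝ (j + 1) v (Set.Ioo a b) ∧
    ∃ C' : ℝ, 0 ≤ C' ∧ ∀ x₁ ∈ Set.Ioo a b, ∀ x₂ ∈ Set.Ioo a b,
      |iteratedDerivWithin (j + 1) v (Set.Ioo a b) x₁ -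
        iteratedDerivWithin (j + 1) v (Set.Ioo a b) x₂| ≤ C' * |x₁ - x₂| ^ θ := by
  open ExpKernel in
  obtain rfl : v = fun x => (leftPart f x + rightPart f x) / 2 :=
    funext fun x => (hv x).trans (integral_eq_leftPart_add_rightPart hf x)
  have hcont : ∀ x ∈ Ioo a b, ContinuousAt f x := fun x hx =>
    hfreg.continuousOn.continuousAt (isOpen_Ioo.mem_nhds hx)
  have hv' := fun x hx => hasDerivAt_half_add hf (hcont x hx)
  have hw' := fun x hx => hasDerivAt_half_sub hf (hcont x hx)
  have hsmooth := contDiffOn_add_two_of_hasDerivAt_sub isOpen_Ioo hv' hw' hfreg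
  have hfb := (convex_Ioo a b).exists_abs_iteratedDerivWithin_le_of_le (Metric.isBounded_Ioo a b)
    (uniqueDiffOn_Ioo a b) hfreg
    (exists_abs_le_of_abs_sub_le_mul_rpow (Metric.isBounded_Ioo a b) hC hθ₀.le hfhol)
  obtain ⟨M, hM⟩ := exists_abs_iteratedDerivWithin_le_of_hasDerivAt_sub isOpen_Ioo hv' hw' hfreg
    hfb ⟨_, fun x _ => abs_half_add_le hf x⟩ ⟨_, fun x _ => abs_half_sub_le hf x⟩ (j + 2) le_rfl
  have hlip := (convex_Ioo a b).abs_sub_le_mul_of_abs_derivWithin_le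
    (hsmooth.differentiableOn_iteratedDerivWithin (m := j + 1) (by norm_cast; omega)
      (uniqueDiffOn_Ioo a b))
    (M := max M 0) fun x hx => by
      rw [← iteratedDerivWithin_succ]
      exact (hM x hx).trans (le_max_left _ _)
  exact ⟨hsmooth.of_le (by norm_cast; omega), _,
    mul_nonneg (le_max_right _ _) (rpow_nonneg Metric.diam_nonneg _),
    abs_sub_le_mul_rpow_of_abs_sub_le_mul (Metric.isBounded_Ioo a b) (le_max_right _ _) hθ₁ hlip⟩

/-- If `f ∈ L¹(ℝ)` is of class `C^{j,θ}` on `(a,b)` (i.e. `j` times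
continuously differentiable there with `θ`-Hölder `j`-th derivative), then
`v = G ∗ f`, with `G(y) = (1/2)·exp(−|y|)`, is of class `C^{j+1,θ}` on `(a,b)`. -/
theorem stmt_16 (f : ℝ → ℝ) (hf : Integrable f volume)
    (a b : ℝ) (hab : a < b) (j : ℕ) (θ : ℝ) (hθ₀ : 0 < θ) (hθ₁ : θ ≤ 1)
    (hfreg : ContDiffOn ℝ j f (Set.Ioo a b))
    (C : ℝ) (hC : 0 ≤ C)
    (hfhol : ∀ x₁ ∈ Set.Ioo a b, ∀ x₂ ∈ Set.Ioo a b,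
      |iteratedDerivWithin j f (Set.Ioo a b) x₁ -
        iteratedDerivWithin j f (Set.Ioo a b) x₂| ≤ C * |x₁ - x₂| ^ θ)
    (v : ℝ → ℝ) (hv : ∀ x, v x = ∫ y, (1 / 2) * Real.exp (-|x - y|) * f y) :
    ContDiffOn ℝ (j + 1) v (Set.Ioo a b) ∧
    ∃ C' : ℝ, 0 ≤ C' ∧ ∀ x₁ ∈ Set.Ioo a b, ∀ x₂ ∈ Set.Ioo a b,
      |iteratedDerivWithin (j + 1) v (Set.Ioo a b) x₁ -
        iteratedDerivWithin (j + 1) v (Set.Ioo a b) x₂| ≤ C' * |x₁ - x₂| ^ θ :=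
  stmt_16_general f hf a b j θ hθ₀ hθ₁ hfreg C hC hfhol v hv
end

section
/- Let c > 0 and h > 0, and consider the peakon profiles u(x) = c·exp(−|x − c·h|) and u₀(x) = c·exp(−|x|). Then sup { |u′(x) − u₀′(x)| : x ∈ (0, c·h) } > c, where u′ and u₀′ denote the derivatives, which exist at every x ∈ (0, c·h). Consequently sup_{x} |u′(x) − u₀′(x)| > c. -/
/-!
On `(0, c h)` both profiles are smooth, with `u' x = c exp (x - c h) > 0` and
`u₀' x = -c exp (-x) < 0`, so `|u' x - u₀' x| = c (exp (x - c h) + exp (-x))`, which tends to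
`c (exp (-c h) + 1) > c` as `x → 0⁺`. The suprema are finite because each peakon is
`|c|`-Lipschitz, which bounds `deriv` by `|c|` everywhere, including the junk value at the peak.
-/

open Real Set Filter Topology

noncomputable def peakon (c a x : ℝ) : ℝ := c * exp (-|x - a|)

theorem abs_exp_neg_abs_sub_exp_neg_abs_le (s t : ℝ) :
    |exp (-|s|) - exp (-|t|)| ≤ |s - t| := by
  wlog hst : |s| ≤ |t| generalizing s t
  · rw [abs_sub_comm, abs_sub_comm s]
    exact this t s (le_of_not_ge hst)
  have hexp : exp (-|t|) ≤ exp (-|s|) := exp_le_exp.mpr (neg_le_neg hst)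
  have hfactor : exp (-|t|) = exp (-|s|) * exp (-(|t| - |s|)) := by
    rw [← exp_add]; ring_nf
  have hone : 1 - exp (-(|t| - |s|)) ≤ |t| - |s| := by
    linarith [add_one_le_exp (-(|t| - |s|))]
  have hone_nonneg : 0 ≤ 1 - exp (-(|t| - |s|)) :=
    sub_nonneg.mpr (exp_le_one_iff.mpr (by linarith))
  have hs : exp (-|s|) ≤ 1 := exp_le_one_iff.mpr (by simp)
  calc |exp (-|s|) - exp (-|t|)| = exp (-|s|) * (1 - exp (-(|t| - |s|))) := by
        rw [abs_of_nonneg (sub_nonneg.mpr hexp), hfactor]; ring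
    _ ≤ 1 * (|t| - |s|) := mul_le_mul hs hone hone_nonneg zero_le_one
    _ ≤ |s - t| := by rw [one_mul, abs_sub_comm]; exact abs_sub_abs_le_abs_sub t s

theorem lipschitzWith_peakon (c a : ℝ) : LipschitzWith ‖c‖₊ (peakon c a) :=
  LipschitzWith.of_dist_le_mul fun x y => by
    simp only [Real.dist_eq, peakon, coe_nnnorm, Real.norm_eq_abs, ← mul_sub, abs_mul]
    refine mul_le_mul_of_nonneg_left ?_ (abs_nonneg c)
    simpa using abs_exp_neg_abs_sub_exp_neg_abs_le (x - a) (y - a)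

theorem abs_deriv_peakon_le (c a x : ℝ) : |deriv (peakon c a) x| ≤ |c| :=
  norm_deriv_le_of_lipschitz (lipschitzWith_peakon c a)

theorem hasDerivAt_peakon_of_lt {c a x : ℝ} (hx : x < a) :
    HasDerivAt (peakon c a) (c * exp (x - a)) x := by
  have hsmooth : HasDerivAt (fun y => c * exp (y - a)) (c * exp (x - a)) x := by
    simpa using ((hasDerivAt_id x).sub_const a).exp.const_mul c
  refine hsmooth.congr_of_eventuallyEq ?_
  filter_upwards [Iio_mem_nhds hx] with y hy
  rw [peakon, abs_of_neg (sub_neg.mpr hy), neg_neg]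

theorem hasDerivAt_peakon_of_gt {c a x : ℝ} (hx : a < x) :
    HasDerivAt (peakon c a) (-(c * exp (a - x))) x := by
  have hsmooth : HasDerivAt (fun y => c * exp (a - y)) (-(c * exp (a - x))) x := by
    simpa using ((hasDerivAt_id x).const_sub a).exp.const_mul c
  refine hsmooth.congr_of_eventuallyEq ?_
  filter_upwards [Ioi_mem_nhds hx] with y hy
  rw [peakon, abs_of_pos (sub_pos.mpr hy), neg_sub]

theorem deriv_peakon_sub_deriv_peakon_zero {c a x : ℝ} (hx : x ∈ Ioo 0 a) :
    deriv (peakon c a) x - deriv (peakon c 0) x = c * (exp (x - a) + exp (-x)) := by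
  rw [(hasDerivAt_peakon_of_lt hx.2).deriv, (hasDerivAt_peakon_of_gt hx.1).deriv]
  ring_nf

/-- The sum dips to `2 exp (-a / 2)` at the midpoint, possibly below `1`, but tends to
`exp (-a) + 1` at `0⁺`. -/
theorem exists_one_lt_exp_sub_add_exp_neg {a : ℝ} (ha : 0 < a) :
    ∃ x ∈ Ioo 0 a, 1 < exp (x - a) + exp (-x) := by
  have hlim : Tendsto (fun x => exp (x - a) + exp (-x)) (𝓝[>] 0) (𝓝 (exp (-a) + 1)) := by
    have : Continuous fun x => exp (x - a) + exp (-x) := by fun_prop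
    simpa using this.continuousWithinAt.tendsto (x := 0) (s := Ioi 0)
  have hgt : ∀ᶠ x in 𝓝[>] 0, 1 < exp (x - a) + exp (-x) :=
    hlim.eventually_const_lt (by linarith [exp_pos (-a)])
  exact (Filter.Eventually.and (Ioo_mem_nhdsGT ha) hgt).exists

theorem bddAbove_abs_deriv_peakon_sub (c a b : ℝ) :
    BddAbove (range fun x => |deriv (peakon c a) x - deriv (peakon c b) x|) := by
  refine ⟨|c| + |c|, forall_mem_range.mpr fun x => ?_⟩
  exact (abs_sub _ _).trans (add_le_add (abs_deriv_peakon_le c a x) (abs_deriv_peakon_le c b x))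

/-- For the peakon profiles `u(x) = c·exp(−|x − c·h|)` and
`u₀(x) = c·exp(−|x|)` (with `c, h > 0`), both are differentiable at every
`x ∈ (0, c·h)`, the sup of `|u' − u₀'|` over `(0, c·h)` exceeds `c`, and hence
the global sup of `|u' − u₀'|` exceeds `c`. -/
theorem stmt_17 (c h : ℝ) (hc : 0 < c) (hh : 0 < h)
    (u u₀ : ℝ → ℝ)
    (hu : ∀ x, u x = c * Real.exp (-|x - c * h|))
    (hu₀ : ∀ x, u₀ x = c * Real.exp (-|x|)) :
    (∀ x ∈ Set.Ioo (0 : ℝ) (c * h),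
      DifferentiableAt ℝ u x ∧ DifferentiableAt ℝ u₀ x) ∧
    c < sSup ((fun x => |deriv u x - deriv u₀ x|) '' Set.Ioo (0 : ℝ) (c * h)) ∧
    c < ⨆ x : ℝ, |deriv u x - deriv u₀ x| := by
  obtain rfl : u = peakon c (c * h) := funext hu
  obtain rfl : u₀ = peakon c 0 := funext fun x => by rw [hu₀, peakon, sub_zero]
  obtain ⟨x₀, hx₀, hgt⟩ := exists_one_lt_exp_sub_add_exp_neg (mul_pos hc hh)
  have hval : c < |deriv (peakon c (c * h)) x₀ - deriv (peakon c 0) x₀| := by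
    rw [deriv_peakon_sub_deriv_peakon_zero hx₀, abs_of_pos (by positivity)]
    exact lt_mul_of_one_lt_right hc hgt
  have hbdd := bddAbove_abs_deriv_peakon_sub c (c * h) 0
  refine ⟨fun x hx => ⟨(hasDerivAt_peakon_of_lt hx.2).differentiableAt,
    (hasDerivAt_peakon_of_gt hx.1).differentiableAt⟩, ?_, ?_⟩
  · exact hval.trans_le (le_csSup (hbdd.mono (image_subset_range _ _)) (mem_image_of_mem _ hx₀))
  · exact hval.trans_le (le_ciSup hbdd x₀)
end
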